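/- arXiv:2210.12325 — 8 statements merged into one kernel-verified Lean document; each statement's English description precedes it below -/
import Mathlib

section
/- Let D be the unique derivation of the polynomial ring ℚ[x,y] determined by D(x) = x·y and D(y) = x². Then for every n ≥ 0, Dⁿ(x) = Σ_{k=0}^{⌊n/2⌋} L(n,k)·x^{2k+1}·y^{n−2k}, where L(n,k) is the number of permutations of [n] with exactly k left peaks (in particular D⁰(x) = x since L(0,0) = 1). -/
open MvPolynomial

/-- The `i`-th entry (1-indexed) of the permutation `σ` of `[n]`, with the
convention that positions `0` and `> n` carry the entry `0`. -/
def permEntry (n : ℕ) (σ : Equiv.Perm (Fin n)) (i : ℕ) : ℕ :=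
  if h : 1 ≤ i ∧ i ≤ n then ((σ ⟨i - 1, by omega⟩ : Fin n) : ℕ) + 1 else 0

/-- The number of left peaks of `σ`: indices `1 ≤ i ≤ n-1` with
`σ_{i-1} < σ_i > σ_{i+1}`, convention `σ₀ = 0`. -/
def leftPeakCount (n : ℕ) (σ : Equiv.Perm (Fin n)) : ℕ :=
  ((Finset.Icc 1 (n - 1)).filter fun i =>
    permEntry n σ (i - 1) < permEntry n σ i ∧ permEntry n σ (i + 1) < permEntry n σ i).card

/-- The number of exterior peaks of `σ`: indices `1 ≤ i ≤ n` with
`σ_{i-1} < σ_i > σ_{i+1}`, conventions `σ₀ = σ_{n+1} = 0`. -/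
def extPeakCount (n : ℕ) (σ : Equiv.Perm (Fin n)) : ℕ :=
  ((Finset.Icc 1 n).filter fun i =>
    permEntry n σ (i - 1) < permEntry n σ i ∧ permEntry n σ (i + 1) < permEntry n σ i).card

/-- The number of interior peaks of `σ`: indices `2 ≤ i ≤ n-1` with
`σ_{i-1} < σ_i > σ_{i+1}`. -/
def intPeakCount (n : ℕ) (σ : Equiv.Perm (Fin n)) : ℕ :=
  ((Finset.Icc 2 (n - 1)).filter fun i =>
    permEntry n σ (i - 1) < permEntry n σ i ∧ permEntry n σ (i + 1) < permEntry n σ i).card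

/-- The number of up-down runs of `σ`: maximal monotone segments of the
extended sequence `0, σ₁, …, σₙ`, i.e. one more than the number of direction
changes of that sequence (and `0` for `n = 0`). -/
def udRunCount (n : ℕ) (σ : Equiv.Perm (Fin n)) : ℕ :=
  if n = 0 then 0 else
    1 + ((Finset.Icc 1 (n - 1)).filter fun i =>
      (permEntry n σ (i - 1) < permEntry n σ i ∧ permEntry n σ (i + 1) < permEntry n σ i) ∨
      (permEntry n σ i < permEntry n σ (i - 1) ∧ permEntry n σ i < permEntry n σ (i + 1))).card

/-- The number of alternating runs of `σ`: maximal monotone segments of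
`σ₁, …, σₙ`, i.e. one more than the number of direction changes (and `0` for `n = 0`). -/
def altRunCount (n : ℕ) (σ : Equiv.Perm (Fin n)) : ℕ :=
  if n = 0 then 0 else
    1 + ((Finset.Icc 2 (n - 1)).filter fun i =>
      (permEntry n σ (i - 1) < permEntry n σ i ∧ permEntry n σ (i + 1) < permEntry n σ i) ∨
      (permEntry n σ i < permEntry n σ (i - 1) ∧ permEntry n σ i < permEntry n σ (i + 1))).card

/-- `L n k` : the number of permutations of `[n]` with exactly `k` left peaks. -/
def leftPeakNum (n k : ℕ) : ℕ :=
  (Finset.univ.filter fun σ : Equiv.Perm (Fin n) => leftPeakCount n σ = k).card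

/-- `W n k` : the number of permutations of `[n]` with exactly `k` exterior peaks. -/
def extPeakNum (n k : ℕ) : ℕ :=
  (Finset.univ.filter fun σ : Equiv.Perm (Fin n) => extPeakCount n σ = k).card

/-- `M n k` : the number of permutations of `[n]` with exactly `k` interior peaks. -/
def intPeakNum (n k : ℕ) : ℕ :=
  (Finset.univ.filter fun σ : Equiv.Perm (Fin n) => intPeakCount n σ = k).card

/-- `Λ n k` : the number of permutations of `[n]` with exactly `k` up-down runs. -/
def udRunNum (n k : ℕ) : ℕ :=
  (Finset.univ.filter fun σ : Equiv.Perm (Fin n) => udRunCount n σ = k).card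

/-- `R n k` : the number of permutations of `[n]` with exactly `k` alternating runs. -/
def altRunNum (n k : ℕ) : ℕ :=
  (Finset.univ.filter fun σ : Equiv.Perm (Fin n) => altRunCount n σ = k).card

/-!
Every permutation of `[n+1]` arises exactly once by inserting the maximum `n+1` into a
permutation `σ` of `[n]`. If `σ` has `k` left peaks, inserting `n+1` at the end or immediately
before or after one of them keeps `k` left peaks; as left peaks are never adjacent these are
`2k+1` distinct positions, and each of the other `n-2k` positions creates exactly one new left
peak. This is the same bookkeeping as
`D(x^{2k+1} y^{n-2k}) = (2k+1) x^{2k+1} y^{n-2k+1} + (n-2k) x^{2k+3} y^{n-2k-1}`,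
so by induction `Dⁿ x = ∑_σ x^{2 lpk σ + 1} y^{n - 2 lpk σ}`.
-/

open Finset

theorem Finset.card_inter_pair_of_succ_notMem {s : Finset ℕ} (hs : ∀ i ∈ s, i + 1 ∉ s) (i : ℕ) :
    #(s ∩ {i, i + 1}) = if i ∈ s ∨ i + 1 ∈ s then 1 else 0 := by
  by_cases hi : i ∈ s
  · simp [inter_insert_of_mem hi, inter_singleton_of_notMem (hs i hi), hi]
  · by_cases hi' : i + 1 ∈ s <;> simp [inter_insert_of_notMem hi, hi, hi']

section LeftPeaks

variable {n : ℕ} (σ : Equiv.Perm (Fin n))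

theorem permEntry_le (i : ℕ) : permEntry n σ i ≤ n := by
  unfold permEntry
  split
  · exact Fin.is_lt _
  · exact Nat.zero_le _

def leftPeaks : Finset ℕ :=
  (Icc 1 (n - 1)).filter fun i =>
    permEntry n σ (i - 1) < permEntry n σ i ∧ permEntry n σ (i + 1) < permEntry n σ i

theorem leftPeakCount_eq_card_leftPeaks : leftPeakCount n σ = #(leftPeaks σ) := rfl

variable {σ}

theorem leftPeaks_subset : leftPeaks σ ⊆ Icc 1 (n - 1) := filter_subset _ _

theorem mem_leftPeaks {i : ℕ} :
    i ∈ leftPeaks σ ↔ 1 ≤ i ∧ i ≤ n - 1 ∧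
      permEntry n σ (i - 1) < permEntry n σ i ∧ permEntry n σ (i + 1) < permEntry n σ i := by
  simp [leftPeaks, and_assoc]

theorem succ_notMem_leftPeaks {i : ℕ} (h : i ∈ leftPeaks σ) : i + 1 ∉ leftPeaks σ := by
  rw [mem_leftPeaks] at *
  simp only [Nat.add_sub_cancel]
  omega

end LeftPeaks

/-- Positions `p ≤ n` (insert after the first `p` entries) at which inserting a new maximum
into `σ` does not create a left peak. -/
def neutralPositions {n : ℕ} (σ : Equiv.Perm (Fin n)) : Finset ℕ :=
  insert n (leftPeaks σ ∪ (leftPeaks σ).image (· - 1))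

section NeutralPositions

variable {n : ℕ} {σ : Equiv.Perm (Fin n)}

theorem mem_neutralPositions {p : ℕ} :
    p ∈ neutralPositions σ ↔ p = n ∨ p ∈ leftPeaks σ ∨ p + 1 ∈ leftPeaks σ := by
  simp only [neutralPositions, mem_insert, mem_union, mem_image]
  refine or_congr_right (or_congr_right ⟨?_, fun h => ⟨p + 1, h, rfl⟩⟩)
  rintro ⟨j, hj, rfl⟩
  rwa [Nat.sub_add_cancel (mem_Icc.1 (leftPeaks_subset hj)).1]

theorem neutralPositions_subset_range : neutralPositions σ ⊆ range (n + 1) := by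
  intro p hp
  rw [mem_range]
  rcases mem_neutralPositions.1 hp with rfl | hp | hp
  · omega
  all_goals have := mem_Icc.1 (leftPeaks_subset hp); omega

theorem card_neutralPositions : #(neutralPositions σ) = 2 * leftPeakCount n σ + 1 := by
  have hbound : ∀ i ∈ leftPeaks σ, 1 ≤ i ∧ i ≤ n - 1 := fun i hi => mem_Icc.1 (leftPeaks_subset hi)
  have hdisj : Disjoint (leftPeaks σ) ((leftPeaks σ).image (· - 1)) := by
    rw [disjoint_left]
    rintro i hi hi'
    obtain ⟨j, hj, rfl⟩ := mem_image.1 hi'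
    exact succ_notMem_leftPeaks hi (by rwa [Nat.sub_add_cancel (hbound j hj).1])
  have hn : n ∉ leftPeaks σ ∪ (leftPeaks σ).image (· - 1) := by
    simp only [mem_union, mem_image, not_or, not_exists, not_and]
    exact ⟨fun h => by have := hbound n h; omega, fun j hj => by have := hbound j hj; omega⟩
  rw [neutralPositions, card_insert_of_notMem hn, card_union_of_disjoint hdisj,
    card_image_of_injOn fun i hi j hj h => by
      have := hbound i hi; have := hbound j hj; omega,
    leftPeakCount_eq_card_leftPeaks]
  ring

theorem two_mul_leftPeakCount_le : 2 * leftPeakCount n σ ≤ n := by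
  have := card_le_card (neutralPositions_subset_range (σ := σ))
  rw [card_neutralPositions, card_range] at this
  omega

end NeutralPositions

section InsertMax

variable {n : ℕ} (σ : Equiv.Perm (Fin n)) (p : Fin (n + 1))

/-- Insert the value `n + 1` into `σ` so that it becomes the `(p + 1)`-st entry. -/
def insertMax : Equiv.Perm (Fin (n + 1)) :=
  (finSuccEquiv' p).trans (σ.optionCongr.trans (finSuccEquiv' (Fin.last n)).symm)

theorem insertMax_apply_self : insertMax σ p p = Fin.last n := by
  simp [insertMax, finSuccEquiv'_at]

theorem insertMax_apply_castSucc {j : Fin n} (h : j.castSucc < p) :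
    insertMax σ p j.castSucc = (σ j).castSucc := by
  simp [insertMax, finSuccEquiv'_below h, Fin.succAbove_last]

theorem insertMax_apply_succ {j : Fin n} (h : p ≤ j.castSucc) :
    insertMax σ p j.succ = (σ j).castSucc := by
  simp [insertMax, finSuccEquiv'_above h, Fin.succAbove_last]

theorem permEntry_insertMax_of_le {i : ℕ} (h : i ≤ p) :
    permEntry (n + 1) (insertMax σ p) i = permEntry n σ i := by
  unfold permEntry
  by_cases hi : 1 ≤ i
  · have hin : i - 1 < n := by omega
    rw [dif_pos ⟨hi, by omega⟩, dif_pos ⟨hi, by omega⟩]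
    have := insertMax_apply_castSucc σ p (j := ⟨i - 1, hin⟩) (by rw [Fin.lt_def]; simp; omega)
    simp only [Fin.castSucc_mk] at this
    simp [this]
  · rw [dif_neg (by omega), dif_neg (by omega)]

theorem permEntry_insertMax_succ :
    permEntry (n + 1) (insertMax σ p) (p + 1) = n + 1 := by
  unfold permEntry
  rw [dif_pos ⟨by omega, by omega⟩]
  simp [insertMax_apply_self]

theorem permEntry_insertMax_of_lt {i : ℕ} (h : p + 1 < i) :
    permEntry (n + 1) (insertMax σ p) i = permEntry n σ (i - 1) := by
  unfold permEntry
  by_cases hi : i ≤ n + 1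
  · have hin : i - 2 < n := by omega
    rw [dif_pos ⟨by omega, hi⟩, dif_pos ⟨by omega, by omega⟩]
    have := insertMax_apply_succ σ p (j := ⟨i - 2, hin⟩) (by rw [Fin.le_def]; simp; omega)
    simp only [Fin.succ_mk, show i - 2 + 1 = i - 1 by omega] at this
    simp [this, show i - 1 - 1 = i - 2 by omega]
  · rw [dif_neg (by omega), dif_neg (by omega)]

end InsertMax

theorem insertMax_injective {n : ℕ} :
    Function.Injective fun σp : Equiv.Perm (Fin n) × Fin (n + 1) => insertMax σp.1 σp.2 := by
  rintro ⟨σ, p⟩ ⟨τ, q⟩ h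
  simp only at h
  obtain rfl : p = q := (insertMax τ q).injective <| by
    rw [insertMax_apply_self, ← h, insertMax_apply_self]
  suffices σ = τ by rw [this]
  ext j
  congr 1
  apply Fin.castSucc_injective
  rcases lt_or_ge j.castSucc p with hj | hj
  · rw [← insertMax_apply_castSucc σ p hj, ← insertMax_apply_castSucc τ p hj, h]
  · rw [← insertMax_apply_succ σ p hj, ← insertMax_apply_succ τ p hj, h]

theorem insertMax_bijective {n : ℕ} :
    Function.Bijective fun σp : Equiv.Perm (Fin n) × Fin (n + 1) => insertMax σp.1 σp.2 := by
  rw [Fintype.bijective_iff_injective_and_card]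
  refine ⟨insertMax_injective, ?_⟩
  simp [Fintype.card_perm, Nat.factorial_succ, mul_comm]

theorem sum_perm_succ_eq_sum_insertMax {M : Type*} [AddCommMonoid M] {n : ℕ}
    (g : Equiv.Perm (Fin (n + 1)) → M) :
    ∑ τ, g τ = ∑ σ : Equiv.Perm (Fin n), ∑ p : Fin (n + 1), g (insertMax σ p) := by
  rw [← Fintype.sum_prod_type']
  exact (Fintype.sum_bijective _ insertMax_bijective _ g fun _ => rfl).symm

section LeftPeaksInsertMax

variable {n : ℕ} (σ : Equiv.Perm (Fin n)) (p : Fin (n + 1))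

theorem mem_leftPeaks_insertMax {i : ℕ} :
    i ∈ leftPeaks (insertMax σ p) ↔ (i < p ∧ i ∈ leftPeaks σ) ∨ (i = p + 1 ∧ (p : ℕ) < n) ∨
      ((p : ℕ) + 2 < i ∧ i - 1 ∈ leftPeaks σ) := by
  have hle := permEntry_le σ
  have hmax := permEntry_insertMax_succ σ p
  have hp := p.is_le
  simp only [mem_leftPeaks]
  obtain hi | rfl | rfl | rfl | hi :
      i < p ∨ i = p ∨ i = p + 1 ∨ i = p + 2 ∨ p + 2 < i := by omega
  · rw [permEntry_insertMax_of_le σ p (i := i - 1) (by omega),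
      permEntry_insertMax_of_le σ p (i := i) (by omega),
      permEntry_insertMax_of_le σ p (i := i + 1) (by omega)]
    omega
  · rw [permEntry_insertMax_of_le σ p le_rfl]
    have := hle p
    omega
  · rw [permEntry_insertMax_of_lt σ p (i := p + 1 + 1) (by omega)]
    simp only [Nat.add_sub_cancel, true_and]
    rw [permEntry_insertMax_of_le σ p le_rfl]
    have := hle p; have := hle (p + 1)
    omega
  · rw [permEntry_insertMax_of_lt σ p (i := p + 2) (by omega),
      show (p : ℕ) + 2 - 1 = p + 1 by omega]
    have := hle (p + 1)
    omega
  · rw [permEntry_insertMax_of_lt σ p (i := i - 1) (by omega),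
      permEntry_insertMax_of_lt σ p (i := i) (by omega),
      permEntry_insertMax_of_lt σ p (i := i + 1) (by omega),
      Nat.sub_add_cancel (by omega : 1 ≤ i)]
    simp only [Nat.add_sub_cancel]
    omega

theorem leftPeaks_insertMax :
    leftPeaks (insertMax σ p) = (if (p : ℕ) < n then {(p : ℕ) + 1} else ∅) ∪
      (leftPeaks σ \ {(p : ℕ), (p : ℕ) + 1}).image fun j : ℕ => if j < p then j else j + 1 := by
  ext i
  simp only [mem_leftPeaks_insertMax, mem_union, mem_image, mem_sdiff, mem_insert,
    mem_singleton]
  constructor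
  · rintro (⟨hi, hL⟩ | ⟨rfl, hp⟩ | ⟨hi, hL⟩)
    · exact Or.inr ⟨i, ⟨hL, by omega⟩, if_pos hi⟩
    · simp [hp]
    · exact Or.inr ⟨i - 1, ⟨hL, by omega⟩, by rw [if_neg (by omega)]; omega⟩
  · rintro (hi | ⟨j, ⟨hL, hj⟩, rfl⟩)
    · split_ifs at hi with hp
      · exact Or.inr (Or.inl ⟨mem_singleton.1 hi, hp⟩)
      · simp at hi
    · split_ifs with hjp
      · exact Or.inl ⟨hjp, hL⟩
      · exact Or.inr (Or.inr ⟨by omega, by rwa [Nat.add_sub_cancel]⟩)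

theorem card_leftPeaks_insertMax :
    #(leftPeaks (insertMax σ p)) =
      (if (p : ℕ) < n then 1 else 0) + #(leftPeaks σ \ {(p : ℕ), (p : ℕ) + 1}) := by
  rw [leftPeaks_insertMax, card_union_of_disjoint, apply_ite card, card_singleton, card_empty,
    card_image_of_injective]
  · intro i j h
    simp only at h
    split_ifs at h <;> omega
  · split_ifs
    · simp only [disjoint_singleton_left, mem_image, mem_sdiff, mem_insert, mem_singleton]
      rintro ⟨j, ⟨-, hj⟩, h⟩
      split_ifs at h <;> omega
    · exact disjoint_empty_left _

theorem leftPeakCount_insertMax :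
    leftPeakCount (n + 1) (insertMax σ p) =
      if (p : ℕ) ∈ neutralPositions σ then leftPeakCount n σ else leftPeakCount n σ + 1 := by
  have hsplit := card_sdiff_add_card_inter (leftPeaks σ) {(p : ℕ), (p : ℕ) + 1}
  rw [card_inter_pair_of_succ_notMem (fun i => succ_notMem_leftPeaks) p] at hsplit
  rw [leftPeakCount_eq_card_leftPeaks, leftPeakCount_eq_card_leftPeaks, card_leftPeaks_insertMax]
  simp only [mem_neutralPositions]
  by_cases hpn : (p : ℕ) = n
  · have hL : ¬((p : ℕ) ∈ leftPeaks σ ∨ (p : ℕ) + 1 ∈ leftPeaks σ) := by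
      rintro (h | h) <;> have := mem_Icc.1 (leftPeaks_subset h) <;> omega
    rw [if_neg hL] at hsplit
    rw [if_neg (by omega), if_pos (Or.inl hpn)]
    omega
  · rw [if_pos (by have := p.is_le; omega)]
    by_cases hL : (p : ℕ) ∈ leftPeaks σ ∨ (p : ℕ) + 1 ∈ leftPeaks σ
    · rw [if_pos hL] at hsplit
      rw [if_pos (Or.inr hL)]
      omega
    · rw [if_neg hL] at hsplit
      rw [if_neg (by tauto)]
      omega

theorem sum_insertMax_leftPeakCount {M : Type*} [AddCommMonoid M] {n : ℕ}
    (σ : Equiv.Perm (Fin n)) (f : ℕ → M) :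
    ∑ p : Fin (n + 1), f (leftPeakCount (n + 1) (insertMax σ p)) =
      (2 * leftPeakCount n σ + 1) • f (leftPeakCount n σ) +
        (n - 2 * leftPeakCount n σ) • f (leftPeakCount n σ + 1) := by
  simp only [leftPeakCount_insertMax, apply_ite f]
  rw [Fin.sum_univ_eq_sum_range
      (fun i => if i ∈ neutralPositions σ then f (leftPeakCount n σ)
        else f (leftPeakCount n σ + 1)) (n + 1),
    sum_ite, filter_mem_eq_inter, filter_notMem_eq_sdiff,
    inter_eq_right.2 neutralPositions_subset_range, sum_const, sum_const,
    card_sdiff_of_subset neutralPositions_subset_range, card_neutralPositions, card_range,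
    Nat.add_sub_add_right]

section Derivation

variable {R A : Type*} [CommSemiring R] [CommSemiring A] [Algebra R A] (D : Derivation R A A)
  {x y : A}

theorem Derivation.apply_pow_mul_pow (hx : D x = x * y) (hy : D y = x ^ 2) (a b : ℕ) :
    D (x ^ (a + 1) * y ^ b) =
      (a + 1) • (x ^ (a + 1) * y ^ (b + 1)) + b • (x ^ (a + 3) * y ^ (b - 1)) := by
  rw [Derivation.leibniz, Derivation.leibniz_pow, Derivation.leibniz_pow, hx, hy]
  rcases b with _ | b <;>
    simp only [pow_zero, zero_smul, zero_add, smul_eq_mul, nsmul_eq_mul, Nat.add_sub_cancel] <;>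
    push_cast <;> ring

theorem Derivation.iterate_eq_sum_leftPeakCount (hx : D x = x * y) (hy : D y = x ^ 2) (n : ℕ) :
    (⇑D)^[n] x = ∑ σ : Equiv.Perm (Fin n),
      x ^ (2 * leftPeakCount n σ + 1) * y ^ (n - 2 * leftPeakCount n σ) := by
  induction n with
  | zero => simp [leftPeakCount_eq_card_leftPeaks, leftPeaks]
  | succ n ih =>
    rw [Function.iterate_succ_apply', ih, map_sum, sum_perm_succ_eq_sum_insertMax]
    refine sum_congr rfl fun σ _ => ?_
    have hk := two_mul_leftPeakCount_le (σ := σ)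
    rw [sum_insertMax_leftPeakCount σ fun k => x ^ (2 * k + 1) * y ^ (n + 1 - 2 * k),
      D.apply_pow_mul_pow hx hy]
    congr 4 <;> omega

end Derivation

/-- `Dⁿ(x) = Σ_{k=0}^{⌊n/2⌋} L(n,k)·x^{2k+1}·y^{n−2k}`. -/
theorem stmt_2 (D : Derivation ℚ (MvPolynomial (Fin 2) ℚ) (MvPolynomial (Fin 2) ℚ))
    (hx : D (X 0) = X 0 * X 1) (hy : D (X 1) = X 0 ^ 2) (n : ℕ) :
    (⇑D)^[n] (X 0) = ∑ k ∈ Finset.range (n / 2 + 1),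
      (leftPeakNum n k : MvPolynomial (Fin 2) ℚ) * X 0 ^ (2 * k + 1) * X 1 ^ (n - 2 * k) := by
  have hmaps : ∀ σ ∈ (univ : Finset (Equiv.Perm (Fin n))),
      leftPeakCount n σ ∈ range (n / 2 + 1) := fun σ _ =>
    mem_range.2 (by have := two_mul_leftPeakCount_le (σ := σ); omega)
  rw [D.iterate_eq_sum_leftPeakCount hx hy n, ← sum_fiberwise_of_maps_to hmaps]
  refine sum_congr rfl fun k _ => ?_
  rw [sum_congr rfl fun σ hσ => by rw [(mem_filter.1 hσ).2], sum_const, leftPeakNum, nsmul_eq_mul,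
    mul_assoc]
end LeftPeaksInsertMax
end

section
/- Let D be the unique derivation of the polynomial ring ℚ[x,y] determined by D(x) = x·y and D(y) = x². Then for every n ≥ 0, Dⁿ(y) = Σ_{k≥0} W(n,k)·x^{2k}·y^{n−2k+1}, where W(n,k) is the number of permutations of [n] with exactly k exterior peaks (the n = 0 term being y). Moreover, for every n ≥ 1, Dⁿ(y) = Σ_{k=0}^{⌊(n−1)/2⌋} M(n,k)·x^{2k+2}·y^{n−2k−1}, where M(n,k) is the number of permutations of [n] with exactly k interior peaks. -/
open MvPolynomial

/-!
Every permutation of `[n + 1]` arises in exactly one way by inserting the value `n + 1` into one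
of the `n + 1` gaps of a permutation of `[n]`. Inserting it into one of the `2k` gaps bordering one
of the `k` exterior peaks moves that peak onto the new entry; inserting it anywhere else creates a
new peak. So the polynomials `∑_σ x^{2 p(σ)} y^{n + 1 - 2 p(σ)}`, `p(σ)` the number of exterior
peaks, obey the same recurrence as `Dⁿ y`, since
`D (x^{2k} y^{n+1-2k}) = 2k x^{2k} y^{n+2-2k} + (n + 1 - 2k) x^{2k+2} y^{n-2k}`.
For interior peaks the two end gaps also preserve the count, so their number plus one obeys the
very same recurrence, and `x^{2k+2} y^{n-1-2k}` is the monomial above for `k + 1`.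
-/

open Finset

namespace PeakPolynomial

variable {n : ℕ}

/-- The permutation of `[n + 1]` obtained from `τ` by inserting the value `n + 1` at the
(1-indexed) position `j + 1`. -/
def insertMax (τ : Equiv.Perm (Fin n)) (j : Fin (n + 1)) : Equiv.Perm (Fin (n + 1)) :=
  ((finSuccEquiv' j).trans τ.optionCongr).trans (finSuccEquiv' (Fin.last n)).symm

@[simp]
lemma insertMax_apply_self (τ : Equiv.Perm (Fin n)) (j : Fin (n + 1)) :
    insertMax τ j j = Fin.last n := by
  simp [insertMax]

@[simp]
lemma insertMax_apply_succAbove (τ : Equiv.Perm (Fin n)) (j : Fin (n + 1)) (q : Fin n) :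
    insertMax τ j (j.succAbove q) = (τ q).castSucc := by
  simp [insertMax, finSuccEquiv'_symm_some, Fin.succAbove_last]

lemma insertMax_injective :
    Function.Injective fun p : Equiv.Perm (Fin n) × Fin (n + 1) => insertMax p.1 p.2 := by
  rintro ⟨τ, j⟩ ⟨τ', j'⟩ h
  dsimp only at h
  obtain rfl : j = j' := (insertMax τ' j').injective <| by
    rw [insertMax_apply_self, ← h, insertMax_apply_self]
  congr
  ext q
  simpa using congrArg (fun σ => (σ (j.succAbove q) : ℕ)) h

lemma sum_perm_succ {M : Type*} [AddCommMonoid M] (F : Equiv.Perm (Fin (n + 1)) → M) :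
    ∑ σ, F σ = ∑ τ : Equiv.Perm (Fin n), ∑ j, F (insertMax τ j) := by
  have hbij : Function.Bijective fun p : Equiv.Perm (Fin n) × Fin (n + 1) => insertMax p.1 p.2 := by
    rw [Fintype.bijective_iff_injective_and_card]
    refine ⟨insertMax_injective, ?_⟩
    simp [Fintype.card_perm, Nat.factorial_succ, mul_comm]
  rw [← Fintype.sum_prod_type']
  exact (Fintype.sum_bijective _ hbij _ _ fun _ => rfl).symm

lemma permEntry_eq_zero (σ : Equiv.Perm (Fin n)) {i : ℕ} (hi : i = 0 ∨ n < i) :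
    permEntry n σ i = 0 := by
  rw [permEntry, dif_neg (by omega)]

lemma permEntry_le (σ : Equiv.Perm (Fin n)) (i : ℕ) : permEntry n σ i ≤ n := by
  unfold permEntry
  split <;> omega

lemma permEntry_succ (σ : Equiv.Perm (Fin n)) (q : Fin n) :
    permEntry n σ (q + 1) = σ q + 1 := by
  rw [permEntry, dif_pos (by omega)]
  rfl

/-- The position, after inserting a new entry just after position `j`, of the entry formerly at
position `i` (positions are 1-indexed, `0` standing for the left boundary). -/
def gapShift (j i : ℕ) : ℕ := if i ≤ j then i else i + 1

lemma gapShift_succ (j : Fin (n + 1)) (q : Fin n) : gapShift j (q + 1) = j.succAbove q + 1 := by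
  rcases lt_or_ge q.castSucc j with h | h
  · rw [Fin.succAbove_of_castSucc_lt _ _ h, gapShift, if_pos (by simpa [Fin.lt_def] using h)]
    rfl
  · rw [Fin.succAbove_of_le_castSucc _ _ h, gapShift, if_neg (by simp [Fin.le_def] at h; omega)]
    rfl

lemma permEntry_insertMax_succ (τ : Equiv.Perm (Fin n)) (j : Fin (n + 1)) :
    permEntry (n + 1) (insertMax τ j) (j + 1) = n + 1 := by
  simp [permEntry_succ]

lemma permEntry_insertMax_gapShift (τ : Equiv.Perm (Fin n)) (j : Fin (n + 1)) (i : ℕ) :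
    permEntry (n + 1) (insertMax τ j) (gapShift j i) = permEntry n τ i := by
  rcases Nat.lt_or_ge n i with hi | hi
  · rw [gapShift, if_neg (by omega), permEntry_eq_zero _ (by omega), permEntry_eq_zero _ (by omega)]
  obtain rfl | ⟨q, rfl⟩ : i = 0 ∨ ∃ q : Fin n, i = q + 1 :=
    i.eq_zero_or_eq_succ_pred.imp id fun h => ⟨⟨i - 1, by omega⟩, h⟩
  · simp [gapShift, permEntry_eq_zero]
  rw [gapShift_succ, permEntry_succ, permEntry_succ, insertMax_apply_succAbove, Fin.val_castSucc]

lemma permEntry_insertMax (τ : Equiv.Perm (Fin n)) (j : Fin (n + 1)) (i : ℕ) :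
    permEntry (n + 1) (insertMax τ j) i =
      if i = j + 1 then n + 1 else permEntry n τ (if i ≤ j then i else i - 1) := by
  split_ifs with h₁ h₂
  · rw [h₁, permEntry_insertMax_succ]
  · rw [← permEntry_insertMax_gapShift τ j, gapShift, if_pos h₂]
  · rw [← permEntry_insertMax_gapShift τ j, gapShift, if_neg (by omega),
      Nat.sub_add_cancel (by omega)]

def IsPeak (n : ℕ) (σ : Equiv.Perm (Fin n)) (i : ℕ) : Prop :=
  permEntry n σ (i - 1) < permEntry n σ i ∧ permEntry n σ (i + 1) < permEntry n σ i

instance (σ : Equiv.Perm (Fin n)) : DecidablePred (IsPeak n σ) := fun _ => instDecidableAnd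

lemma IsPeak.not_succ {σ : Equiv.Perm (Fin n)} {i : ℕ} (h : IsPeak n σ i) :
    ¬IsPeak n σ (i + 1) := fun h' => by
  have := h'.1
  simp only [Nat.add_sub_cancel] at this
  exact lt_asymm h.2 this

lemma isPeak_insertMax_succ (τ : Equiv.Perm (Fin n)) (j : Fin (n + 1)) :
    IsPeak (n + 1) (insertMax τ j) (j + 1) := by
  have := permEntry_le τ j
  have := permEntry_le τ (j + 1)
  simp only [IsPeak, permEntry_insertMax, Nat.add_sub_cancel]
  split_ifs <;> omega

lemma isPeak_insertMax_gapShift (τ : Equiv.Perm (Fin n)) (j : Fin (n + 1)) (i : ℕ) :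
    IsPeak (n + 1) (insertMax τ j) (gapShift j i) ↔ IsPeak n τ i ∧ i ≠ j ∧ i ≠ j + 1 := by
  have := permEntry_le τ (i - 1)
  have := permEntry_le τ i
  have := permEntry_le τ (i + 1)
  simp only [IsPeak, permEntry_insertMax, gapShift]
  split_ifs <;> simp_all <;> omega

lemma card_filter_Icc_one_eq_card_filter_fin (P : ℕ → Prop) [DecidablePred P] (m : ℕ) :
    #{i ∈ Icc 1 m | P i} = #{p : Fin m | P (p + 1)} := by
  refine card_bij' (fun i hi => ⟨i - 1, by simp at hi; omega⟩) (fun p _ => p + 1) ?_ ?_ ?_ ?_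
  · intro i hi
    simp only [mem_filter, mem_Icc] at hi
    simpa [Nat.sub_add_cancel hi.1.1] using hi.2
  · intro p hp
    simpa using hp
  · intro i hi
    simp only [mem_filter, mem_Icc] at hi
    simp [Nat.sub_add_cancel hi.1.1]
  · simp

lemma card_filter_Icc_succ (P : ℕ → Prop) [DecidablePred P] (j : Fin (n + 1)) :
    #{i ∈ Icc 1 (n + 1) | P i} =
      (if P (j + 1) then 1 else 0) + #{i ∈ Icc 1 n | P (gapShift j i)} := by
  rw [card_filter_Icc_one_eq_card_filter_fin, card_filter_Icc_one_eq_card_filter_fin,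
    card_filter, card_filter, Fin.sum_univ_succAbove _ j]
  simp only [gapShift_succ]

def peakSet (n : ℕ) (σ : Equiv.Perm (Fin n)) : Finset ℕ := {i ∈ Icc 1 n | IsPeak n σ i}

def intPeakSet (n : ℕ) (σ : Equiv.Perm (Fin n)) : Finset ℕ := {i ∈ Icc 2 (n - 1) | IsPeak n σ i}

lemma extPeakCount_eq_card_peakSet (σ : Equiv.Perm (Fin n)) :
    extPeakCount n σ = #(peakSet n σ) := rfl

lemma intPeakCount_eq_card_intPeakSet (σ : Equiv.Perm (Fin n)) :
    intPeakCount n σ = #(intPeakSet n σ) := rfl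

lemma card_peakSet_insertMax (τ : Equiv.Perm (Fin n)) (j : Fin (n + 1)) :
    #(peakSet (n + 1) (insertMax τ j)) = 1 + #{i ∈ peakSet n τ | i ≠ (j : ℕ) ∧ i ≠ j + 1} := by
  rw [peakSet, card_filter_Icc_succ _ j, if_pos (isPeak_insertMax_succ τ j), peakSet,
    filter_filter]
  simp only [isPeak_insertMax_gapShift]

lemma card_intPeakSet_insertMax (τ : Equiv.Perm (Fin n)) (j : Fin (n + 1)) :
    #(intPeakSet (n + 1) (insertMax τ j)) =
      (if 1 ≤ (j : ℕ) ∧ (j : ℕ) < n then 1 else 0) +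
        #{i ∈ intPeakSet n τ | i ≠ (j : ℕ) ∧ i ≠ j + 1} := by
  have hj := j.is_lt
  have hwindow : intPeakSet (n + 1) (insertMax τ j) =
      {i ∈ Icc 1 (n + 1) | IsPeak (n + 1) (insertMax τ j) i ∧ 2 ≤ i ∧ i ≤ n} := by
    ext i
    simp only [intPeakSet, mem_filter, mem_Icc, Nat.add_sub_cancel]
    grind
  rw [hwindow, card_filter_Icc_succ _ j, intPeakSet, filter_filter]
  congr 1
  · simp only [isPeak_insertMax_succ, true_and]
    congr 1
    simp only [eq_iff_iff]
    omega
  · apply congrArg card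
    ext i
    rw [mem_filter, mem_filter, isPeak_insertMax_gapShift]
    simp only [mem_Icc, gapShift]
    grind

lemma card_filter_ne_add_ite {S : Finset ℕ} (hS : ∀ i ∈ S, i + 1 ∉ S) (j : ℕ) :
    #{i ∈ S | i ≠ j ∧ i ≠ j + 1} + (if j ∈ S ∨ j + 1 ∈ S then 1 else 0) = #S := by
  rw [← card_filter_add_card_filter_not (fun i => i ≠ j ∧ i ≠ j + 1) (s := S)]
  congr 1
  simp only [not_and_or, not_not, filter_or, filter_eq']
  by_cases h₁ : j ∈ S <;> by_cases h₂ : j + 1 ∈ S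
  · exact absurd h₂ (hS j h₁)
  all_goals simp [h₁, h₂]

/-- Gap `J ∈ {0, …, n}` lies between positions `J` and `J + 1`. -/
def adjacentGaps (n : ℕ) (S : Finset ℕ) : Finset ℕ := {J ∈ range (n + 1) | J ∈ S ∨ J + 1 ∈ S}

lemma card_adjacentGaps {S : Finset ℕ} (hS : S ⊆ Icc 1 n) (hsep : ∀ i ∈ S, i + 1 ∉ S) :
    #(adjacentGaps n S) = 2 * #S := by
  have hpos : ∀ i ∈ S, 1 ≤ i := fun i hi => (mem_Icc.mp (hS hi)).1
  have hunion : adjacentGaps n S = S ∪ S.image (· - 1) := by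
    ext J
    simp only [adjacentGaps, mem_filter, mem_range, mem_union, mem_image]
    constructor
    · rintro ⟨-, hJ | hJ⟩
      · exact .inl hJ
      · exact .inr ⟨J + 1, hJ, rfl⟩
    · rintro (hJ | ⟨i, hi, rfl⟩)
      · exact ⟨by have := mem_Icc.mp (hS hJ); omega, .inl hJ⟩
      · have := mem_Icc.mp (hS hi)
        exact ⟨by omega, .inr (by rwa [Nat.sub_add_cancel this.1])⟩
  have hdisj : Disjoint S (S.image (· - 1)) := by
    rw [disjoint_left]
    intro _ hi hi'
    obtain ⟨k, hk, rfl⟩ := mem_image.mp hi'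
    exact hsep _ hi (by rwa [Nat.sub_add_cancel (hpos k hk)])
  rw [hunion, card_union_of_disjoint hdisj, card_image_of_injOn, two_mul]
  intro a ha b hb hab
  have := hpos a ha
  have := hpos b hb
  simp only at hab
  omega

def InsertionRecurrence (c : (n : ℕ) → Equiv.Perm (Fin n) → ℕ) (n : ℕ) : Prop :=
  ∀ τ : Equiv.Perm (Fin n), ∃ G ⊆ range (n + 1), #G = 2 * c n τ ∧
    ∀ j : Fin (n + 1), c (n + 1) (insertMax τ j) = if (j : ℕ) ∈ G then c n τ else c n τ + 1

namespace InsertionRecurrence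

variable {c : (n : ℕ) → Equiv.Perm (Fin n) → ℕ}

lemma two_mul_le (hc : InsertionRecurrence c n) (τ : Equiv.Perm (Fin n)) :
    2 * c n τ ≤ n + 1 := by
  obtain ⟨G, hG, hcard, -⟩ := hc τ
  simpa [hcard] using card_le_card hG

lemma sum_insertMax {M : Type*} [AddCommMonoid M] (hc : InsertionRecurrence c n)
    (τ : Equiv.Perm (Fin n)) (f : ℕ → M) :
    ∑ j, f (c (n + 1) (insertMax τ j)) =
      (2 * c n τ) • f (c n τ) + (n + 1 - 2 * c n τ) • f (c n τ + 1) := by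
  obtain ⟨G, hG, hcard, hstep⟩ := hc τ
  simp only [hstep, apply_ite f]
  rw [Fin.sum_univ_eq_sum_range (fun J => if J ∈ G then f (c n τ) else f (c n τ + 1)),
    sum_ite, sum_const, sum_const, filter_mem_eq_inter, inter_eq_right.mpr hG, filter_not,
    filter_mem_eq_inter, inter_eq_right.mpr hG, card_sdiff_of_subset hG, card_range, hcard]

end InsertionRecurrence

lemma insertionRecurrence_extPeakCount (n : ℕ) : InsertionRecurrence extPeakCount n := by
  intro τ
  set S := peakSet n τ with hS
  have hsep : ∀ i ∈ S, i + 1 ∉ S := fun i hi hi' =>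
    (mem_filter.mp hi).2.not_succ (mem_filter.mp hi').2
  refine ⟨adjacentGaps n S, filter_subset _ _, card_adjacentGaps (filter_subset _ _) hsep,
    fun j => ?_⟩
  have hcount := card_filter_ne_add_ite hsep j
  have hmem : (j : ℕ) ∈ adjacentGaps n S ↔ (j : ℕ) ∈ S ∨ (j : ℕ) + 1 ∈ S := by
    simp [adjacentGaps, j.is_lt]
  simp only [extPeakCount_eq_card_peakSet, card_peakSet_insertMax, hmem, ← hS]
  split_ifs at hcount ⊢ <;> omega

lemma insertionRecurrence_intPeakCount_add_one (hn : 1 ≤ n) :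
    InsertionRecurrence (fun n σ => intPeakCount n σ + 1) n := by
  intro τ
  set T := intPeakSet n τ with hT_def
  have hT : T ⊆ Icc 2 (n - 1) := filter_subset _ _
  have hsep : ∀ i ∈ T, i + 1 ∉ T := fun i hi hi' =>
    (mem_filter.mp hi).2.not_succ (mem_filter.mp hi').2
  have hgaps : ∀ J ∈ adjacentGaps n T, 1 ≤ J ∧ J < n := by
    intro J hJ
    rcases (mem_filter.mp hJ).2 with h | h <;> have := mem_Icc.mp (hT h) <;> omega
  refine ⟨insert 0 (insert n (adjacentGaps n T)), ?_, ?_, fun j => ?_⟩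
  · simp only [insert_subset_iff, mem_range]
    exact ⟨by omega, by omega, filter_subset _ _⟩
  · rw [card_insert_of_notMem, card_insert_of_notMem,
      card_adjacentGaps (hT.trans (Icc_subset_Icc (by omega) (by omega))) hsep]
    · change 2 * #T + 1 + 1 = 2 * (#T + 1)
      ring
    · exact fun h => by have := hgaps n h; omega
    · simp only [mem_insert, not_or]
      exact ⟨by omega, fun h => by have := hgaps 0 h; omega⟩
  have hcount := card_filter_ne_add_ite hsep j
  have hmem : (j : ℕ) ∈ insert 0 (insert n (adjacentGaps n T)) ↔
      ((j : ℕ) = 0 ∨ (j : ℕ) = n) ∨ (j : ℕ) ∈ T ∨ (j : ℕ) + 1 ∈ T := by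
    simp [adjacentGaps, j.is_lt, or_assoc]
  simp only [intPeakCount_eq_card_intPeakSet, card_intPeakSet_insertMax, hmem, ← hT_def]
  have := j.is_lt
  split_ifs at hcount ⊢ <;> grind

section Derivation

variable {R A : Type*} [CommSemiring R] [CommSemiring A] [Algebra R A]
  (D : Derivation R A A) {x y : A}

lemma derivation_pow_mul_pow (hx : D x = x * y) (hy : D y = x ^ 2) (a b : ℕ) :
    D (x ^ a * y ^ b) = a • (x ^ a * y ^ (b + 1)) + b • (x ^ (a + 2) * y ^ (b - 1)) := by
  rw [Derivation.leibniz, Derivation.leibniz_pow, Derivation.leibniz_pow, hx, hy]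
  cases a <;> cases b <;>
    simp only [smul_eq_mul, nsmul_eq_mul, Nat.add_sub_cancel, Nat.cast_zero, Nat.cast_succ] <;> ring

variable (x y) in
def peakMonomial (n k : ℕ) : A := x ^ (2 * k) * y ^ (n + 1 - 2 * k)

lemma derivation_peakMonomial (hx : D x = x * y) (hy : D y = x ^ 2) {n k : ℕ}
    (hk : 2 * k ≤ n + 1) :
    D (peakMonomial x y n k) =
      (2 * k) • peakMonomial x y (n + 1) k +
        (n + 1 - 2 * k) • peakMonomial x y (n + 1) (k + 1) := by
  rw [peakMonomial, derivation_pow_mul_pow D hx hy, peakMonomial, peakMonomial,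
    show n + 1 - 2 * k + 1 = n + 1 + 1 - 2 * k by omega,
    show n + 1 - 2 * k - 1 = n + 1 + 1 - 2 * (k + 1) by omega, mul_add_one]

lemma iterate_derivation_eq_sum_peakMonomial (hx : D x = x * y) (hy : D y = x ^ 2)
    (c : (n : ℕ) → Equiv.Perm (Fin n) → ℕ) {n₀ : ℕ}
    (h₀ : (⇑D)^[n₀] y = ∑ σ, peakMonomial x y n₀ (c n₀ σ))
    (hc : ∀ n ≥ n₀, InsertionRecurrence c n) :
    ∀ n ≥ n₀, (⇑D)^[n] y = ∑ σ, peakMonomial x y n (c n σ) := by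
  intro n hn
  induction n, hn using Nat.le_induction with
  | base => exact h₀
  | succ n hn ih =>
    rw [Function.iterate_succ_apply', ih, map_sum, sum_perm_succ]
    refine sum_congr rfl fun τ _ => ?_
    rw [derivation_peakMonomial D hx hy ((hc n hn).two_mul_le τ), (hc n hn).sum_insertMax]

end Derivation

lemma sum_eq_sum_range_card_filter_smul {ι M : Type*} [Fintype ι] [AddCommMonoid M] (g : ι → ℕ)
    {N : ℕ} (hg : ∀ i, g i ≤ N) (f : ℕ → M) :
    ∑ i, f (g i) = ∑ k ∈ range (N + 1), #{i | g i = k} • f k := by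
  rw [← sum_fiberwise_of_maps_to' fun i _ => mem_range.mpr (Nat.lt_succ_of_le (hg i))]
  simp only [sum_const]

end PeakPolynomial

open PeakPolynomial

/-- `Dⁿ(y) = Σ_k W(n,k)·x^{2k}·y^{n−2k+1}` for all `n ≥ 0`, and
`Dⁿ(y) = Σ_{k=0}^{⌊(n−1)/2⌋} M(n,k)·x^{2k+2}·y^{n−2k−1}` for all `n ≥ 1`. -/
theorem stmt_3 (D : Derivation ℚ (MvPolynomial (Fin 2) ℚ) (MvPolynomial (Fin 2) ℚ))
    (hx : D (X 0) = X 0 * X 1) (hy : D (X 1) = X 0 ^ 2) :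
    (∀ n : ℕ, (⇑D)^[n] (X 1) = ∑ k ∈ Finset.range ((n + 1) / 2 + 1),
        (extPeakNum n k : MvPolynomial (Fin 2) ℚ) * X 0 ^ (2 * k) * X 1 ^ (n + 1 - 2 * k)) ∧
    (∀ n : ℕ, 1 ≤ n → (⇑D)^[n] (X 1) = ∑ k ∈ Finset.range ((n - 1) / 2 + 1),
        (intPeakNum n k : MvPolynomial (Fin 2) ℚ) * X 0 ^ (2 * k + 2) * X 1 ^ (n - 1 - 2 * k)) := by
  have hext := iterate_derivation_eq_sum_peakMonomial D hx hy extPeakCount (n₀ := 0)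
    (by simp [peakMonomial, extPeakCount]) fun n _ => insertionRecurrence_extPeakCount n
  have hint := iterate_derivation_eq_sum_peakMonomial D hx hy (fun n σ => intPeakCount n σ + 1)
    (n₀ := 1) (by simp [peakMonomial, intPeakCount, hy])
    fun _ => insertionRecurrence_intPeakCount_add_one
  refine ⟨fun n => ?_, fun n hn => ?_⟩
  · rw [hext n n.zero_le, sum_eq_sum_range_card_filter_smul (N := (n + 1) / 2) _
      fun σ => by have := (insertionRecurrence_extPeakCount n).two_mul_le σ; omega]
    refine sum_congr rfl fun k _ => ?_
    rw [nsmul_eq_mul, peakMonomial, mul_assoc]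
    rfl
  · rw [hint n hn, sum_eq_sum_range_card_filter_smul (N := (n - 1) / 2) (intPeakCount n)
      (fun σ => by have := (insertionRecurrence_intPeakCount_add_one hn).two_mul_le σ; omega)
      fun k => peakMonomial (X 0) (X 1) n (k + 1)]
    refine sum_congr rfl fun k _ => ?_
    rw [nsmul_eq_mul, peakMonomial, mul_assoc, mul_add_one,
      show n + 1 - (2 * k + 2) = n - 1 - 2 * k by omega]
    rfl
end

section
/- Let D be the unique derivation of the polynomial ring ℚ[x,y] determined by D(x) = x·y and D(y) = x², and for f ∈ ℚ[x,y] let Gen(f,t) = Σ_{n≥0} Dⁿ(f)·tⁿ/n! in ℚ[x,y][[t]]. Then, writing ' for the formal derivative with respect to t, the following ordinary differential equations hold: (Gen(x,t)')² = Gen(x,t)²·(Gen(x,t)² − x² + y²), and Gen(y,t)' = Gen(y,t)² + (x² − y²); moreover Gen(x,0) = x and Gen(y,0) = y. -/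
/-!
`Gen D` is the ring homomorphism `exp (t • D) : ℚ[x,y] → ℚ[x,y]⟦t⟧` (multiplicativity is the
iterated Leibniz rule), and it turns `D` into `d/dt`. Hence `Gen(x)' = Gen(x) Gen(y)` and
`Gen(y)' = Gen(x)²`, while the first integral `x² - y²` of `D` is sent to the constant series
`x² - y²`; eliminating `Gen(y)` or `Gen(x)` with this conservation law gives the two equations.
-/

open MvPolynomial

/-- `Gen D f = Σ_{n≥0} Dⁿ(f)·tⁿ/n!` in `ℚ[x,y][[t]]`. -/
noncomputable def Gen (D : Derivation ℚ (MvPolynomial (Fin 2) ℚ) (MvPolynomial (Fin 2) ℚ))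
    (f : MvPolynomial (Fin 2) ℚ) : PowerSeries (MvPolynomial (Fin 2) ℚ) :=
  PowerSeries.mk fun n => ((n.factorial : ℚ))⁻¹ • (⇑D)^[n] f

open Finset

theorem Derivation.iterate_apply_mul {R A : Type*} [CommSemiring R] [CommSemiring A] [Algebra R A]
    (D : Derivation R A A) (n : ℕ) (a b : A) :
    (⇑D)^[n] (a * b) = ∑ ij ∈ antidiagonal n, n.choose ij.1 • ((⇑D)^[ij.1] a * (⇑D)^[ij.2] b) := by
  induction n with
  | zero => simp
  | succ n ih =>
    rw [sum_antidiagonal_choose_succ_nsmul (M := A) (fun i j => (⇑D)^[i] a * (⇑D)^[j] b) n]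
    simp only [Function.iterate_succ_apply', ih, map_sum, map_nsmul, Derivation.leibniz,
      smul_eq_mul, smul_add, sum_add_distrib]
    congr 1
    refine sum_congr rfl fun ⟨i, j⟩ hij ↦ ?_
    rw [n.choose_symm_of_eq_add (mem_antidiagonal.1 hij).symm, mul_comm]

section

variable (D : Derivation ℚ (MvPolynomial (Fin 2) ℚ) (MvPolynomial (Fin 2) ℚ))

theorem coeff_gen (f : MvPolynomial (Fin 2) ℚ) (n : ℕ) :
    PowerSeries.coeff n (Gen D f) = (n.factorial : ℚ)⁻¹ • (⇑D)^[n] f :=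
  PowerSeries.coeff_mk _ _

theorem constantCoeff_gen (f : MvPolynomial (Fin 2) ℚ) :
    PowerSeries.constantCoeff (Gen D f) = f := by
  simp [← PowerSeries.coeff_zero_eq_constantCoeff, coeff_gen]

theorem gen_of_apply_eq_zero {f : MvPolynomial (Fin 2) ℚ} (hf : D f = 0) :
    Gen D f = PowerSeries.C f := by
  refine PowerSeries.ext fun n ↦ ?_
  rcases n with _ | n
  · simp [coeff_gen]
  · simp [coeff_gen, Function.iterate_succ_apply, hf, Function.iterate_fixed (map_zero D)]

theorem gen_add (f g : MvPolynomial (Fin 2) ℚ) : Gen D (f + g) = Gen D f + Gen D g := by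
  refine PowerSeries.ext fun n ↦ ?_
  simp [coeff_gen, iterate_map_add]

theorem gen_mul (f g : MvPolynomial (Fin 2) ℚ) : Gen D (f * g) = Gen D f * Gen D g := by
  refine PowerSeries.ext fun n ↦ ?_
  simp only [PowerSeries.coeff_mul, coeff_gen, D.iterate_apply_mul, smul_sum]
  refine sum_congr rfl fun ⟨i, j⟩ hij ↦ ?_
  obtain rfl := mem_antidiagonal.1 hij
  rw [smul_mul_smul_comm, ← Nat.cast_smul_eq_nsmul ℚ, smul_smul,
    Nat.cast_choose ℚ (Nat.le_add_right i j)]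
  congr 1
  simp only [Nat.add_sub_cancel_left]
  field_simp

noncomputable def genRingHom :
    MvPolynomial (Fin 2) ℚ →+* PowerSeries (MvPolynomial (Fin 2) ℚ) where
  toFun := Gen D
  map_one' := (gen_of_apply_eq_zero D D.map_one_eq_zero).trans PowerSeries.C.map_one
  map_mul' := gen_mul D
  map_zero' := (gen_of_apply_eq_zero D D.map_zero).trans PowerSeries.C.map_zero
  map_add' := gen_add D

theorem derivative_gen (f : MvPolynomial (Fin 2) ℚ) :
    PowerSeries.derivative _ (Gen D f) = Gen D (D f) := by
  refine PowerSeries.ext fun n ↦ ?_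
  rw [PowerSeries.coeff_derivative, mul_comm, ← Nat.cast_add_one, ← nsmul_eq_mul,
    ← Nat.cast_smul_eq_nsmul ℚ, coeff_gen, coeff_gen, ← Function.iterate_succ_apply, smul_smul,
    Nat.factorial_succ]
  congr 1
  push_cast
  field_simp

theorem coe_genRingHom : ⇑(genRingHom D) = Gen D := rfl

end

/-- `(Gen(x,t)')² = Gen(x,t)²·(Gen(x,t)² − x² + y²)`,
`Gen(y,t)' = Gen(y,t)² + (x² − y²)`, `Gen(x,0) = x` and `Gen(y,0) = y`. -/
theorem stmt_4 (D : Derivation ℚ (MvPolynomial (Fin 2) ℚ) (MvPolynomial (Fin 2) ℚ))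
    (hx : D (X 0) = X 0 * X 1) (hy : D (X 1) = X 0 ^ 2) :
    (PowerSeries.derivative (MvPolynomial (Fin 2) ℚ) (Gen D (X 0))) ^ 2
        = Gen D (X 0) ^ 2 *
          (Gen D (X 0) ^ 2 - PowerSeries.C ((X 0) ^ 2) + PowerSeries.C ((X 1) ^ 2)) ∧
      PowerSeries.derivative (MvPolynomial (Fin 2) ℚ) (Gen D (X 1))
        = Gen D (X 1) ^ 2 + PowerSeries.C ((X 0) ^ 2 - (X 1) ^ 2) ∧
      PowerSeries.constantCoeff (Gen D (X 0)) = X 0 ∧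
      PowerSeries.constantCoeff (Gen D (X 1)) = X 1 := by
  have h_first_integral : D (X 0 ^ 2 - X 1 ^ 2) = 0 := by
    simp only [map_sub, Derivation.leibniz_pow, hx, hy, smul_eq_mul]
    ring
  have h_conserved : Gen D (X 0) ^ 2 - Gen D (X 1) ^ 2 = PowerSeries.C (X 0 ^ 2 - X 1 ^ 2) := by
    simpa only [← coe_genRingHom, map_sub, map_pow] using gen_of_apply_eq_zero D h_first_integral
  have h_deriv_x : PowerSeries.derivative _ (Gen D (X 0)) = Gen D (X 0) * Gen D (X 1) := by
    rw [derivative_gen, hx, gen_mul]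
  have h_deriv_y : PowerSeries.derivative _ (Gen D (X 1)) = Gen D (X 0) ^ 2 := by
    rw [derivative_gen, hy, ← coe_genRingHom, map_pow]
  refine ⟨?_, ?_, constantCoeff_gen D _, constantCoeff_gen D _⟩
  · rw [h_deriv_x, mul_pow]
    rw [map_sub] at h_conserved
    linear_combination (-Gen D (X 0) ^ 2) * h_conserved
  · rw [h_deriv_y]
    linear_combination h_conserved
end

section
/- Let n ≥ 0 and let σ be a permutation of [n+1]. Write σ = π (n+1) τ, where π and τ are the (possibly empty) subwords of σ before and after the maximum entry n+1, and let τ' be the reverse of τ. Then the number of exterior peaks of σ equals the number of left peaks of π plus the number of left peaks of τ' plus 1. -/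
/-!
The maximum `n + 1` sits above all its neighbours, so its position is always an exterior
peak. A position inside `π` is a peak of `σ` exactly when it is a left peak of `π`: the last
letter of `π` is followed by `n + 1` and is never a peak. Reading `σ` backwards maps peaks to
peaks and turns the positions inside `τ` into the positions inside `τ'`, which now precede
`n + 1`, so they contribute the left peaks of `τ'`.
-/

/-- The `i`-th entry (1-indexed) of the word `l`, with the convention that
position `0` and positions beyond the length carry the entry `0`. -/
def wordEntry (l : List ℕ) (i : ℕ) : ℕ :=
  if i = 0 then 0 else l.getD (i - 1) 0

/-- The number of exterior peaks of the word `l`: indices `1 ≤ i ≤ m` with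
`w_{i−1} < w_i > w_{i+1}` (conventions `w₀ = w_{m+1} = 0`). -/
def wordExtPeaks (l : List ℕ) : ℕ :=
  ((Finset.Icc 1 l.length).filter fun i =>
    wordEntry l (i - 1) < wordEntry l i ∧ wordEntry l (i + 1) < wordEntry l i).card

/-- The number of left peaks of the word `l`: indices `1 ≤ i ≤ m−1` with
`w_{i−1} < w_i > w_{i+1}` (convention `w₀ = 0`). -/
def wordLeftPeaks (l : List ℕ) : ℕ :=
  ((Finset.Icc 1 (l.length - 1)).filter fun i =>
    wordEntry l (i - 1) < wordEntry l i ∧ wordEntry l (i + 1) < wordEntry l i).card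

open Finset

def IsPeak (l : List ℕ) (i : ℕ) : Prop :=
  wordEntry l (i - 1) < wordEntry l i ∧ wordEntry l (i + 1) < wordEntry l i

instance (l : List ℕ) : DecidablePred (IsPeak l) := fun _ => inferInstanceAs (Decidable (_ ∧ _))

theorem wordExtPeaks_eq_card (l : List ℕ) :
    wordExtPeaks l = #{i ∈ Icc 1 l.length | IsPeak l i} := rfl

theorem wordLeftPeaks_eq_card (l : List ℕ) :
    wordLeftPeaks l = #{i ∈ Icc 1 (l.length - 1) | IsPeak l i} := rfl

theorem card_filter_Icc_of_mem {p : ℕ → Prop} [DecidablePred p] {a b : ℕ} (h : p (a + 1)) :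
    #{i ∈ Icc 1 (a + 1 + b) | p i} =
      #{i ∈ Icc 1 a | p i} + 1 + #{i ∈ Icc (a + 2) (a + 1 + b) | p i} := by
  have hsplit : Icc 1 (a + 1 + b) = Icc 1 a ∪ insert (a + 1) (Icc (a + 2) (a + 1 + b)) := by
    ext i
    simp only [mem_union, mem_insert, mem_Icc]
    omega
  rw [hsplit, filter_union, filter_insert, if_pos h, card_union_of_disjoint, card_insert_of_notMem]
  · omega
  · simp
  · refine disjoint_left.2 fun i hi hi' => ?_
    simp only [mem_filter, mem_insert, mem_Icc] at hi hi'
    omega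

theorem wordEntry_le_of_forall_mem_le {l : List ℕ} {n : ℕ} (h : ∀ x ∈ l, x ≤ n)
    (i : ℕ) : wordEntry l i ≤ n := by
  unfold wordEntry
  split_ifs
  · exact Nat.zero_le n
  · by_cases hi : i - 1 < l.length
    · rw [List.getD_eq_getElem _ _ hi]
      exact h _ (List.getElem_mem hi)
    · rw [List.getD_eq_default _ _ (by omega)]
      exact Nat.zero_le n

theorem wordEntry_append_of_le {u v : List ℕ} {i : ℕ} (hi : i ≤ u.length) :
    wordEntry (u ++ v) i = wordEntry u i := by
  unfold wordEntry
  split_ifs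
  · rfl
  · exact List.getD_append _ _ _ _ (by omega)

theorem wordEntry_append_length_add {u v : List ℕ} {k : ℕ} (hk : k ≠ 0) :
    wordEntry (u ++ v) (u.length + k) = wordEntry v k := by
  unfold wordEntry
  rw [if_neg (by omega), if_neg hk, List.getD_append_right _ _ _ _ (by omega)]
  congr 1
  omega

theorem wordEntry_reverse {l : List ℕ} {i : ℕ} (hi : i ≤ l.length + 1) :
    wordEntry l.reverse i = wordEntry l (l.length + 1 - i) := by
  unfold wordEntry
  split_ifs with h1 h2 h2
  · rfl
  · rw [List.getD_eq_default _ _ (by omega)]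
  · rw [List.getD_eq_default _ _ (by simp; omega)]
  · rw [List.getD_eq_getElem _ _ (by simp; omega), List.getD_eq_getElem _ _ (by omega),
      List.getElem_reverse]
    congr 1
    omega

theorem isPeak_reverse_iff {l : List ℕ} {i : ℕ} (h1 : 1 ≤ i) (h2 : i ≤ l.length) :
    IsPeak l.reverse i ↔ IsPeak l (l.length + 1 - i) := by
  unfold IsPeak
  rw [wordEntry_reverse (by omega), wordEntry_reverse (by omega), wordEntry_reverse (by omega),
    show l.length + 1 - (i - 1) = l.length + 1 - i + 1 by omega,
    show l.length + 1 - (i + 1) = l.length + 1 - i - 1 by omega, and_comm]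

theorem card_filter_isPeak_reverse (l : List ℕ) {p q : ℕ} (hp : 1 ≤ p) (hq : q ≤ l.length) :
    #{i ∈ Icc p q | IsPeak l.reverse i} =
      #{i ∈ Icc (l.length + 1 - q) (l.length + 1 - p) | IsPeak l i} := by
  refine card_bij' (fun i _ => l.length + 1 - i) (fun i _ => l.length + 1 - i) ?_ ?_ ?_ ?_
  · intro i hi
    simp only [mem_filter, mem_Icc] at hi ⊢
    exact ⟨by omega, (isPeak_reverse_iff (by omega) (by omega)).1 hi.2⟩
  · intro i hi
    simp only [mem_filter, mem_Icc] at hi ⊢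
    refine ⟨by omega, (isPeak_reverse_iff (by omega) (by omega)).2 ?_⟩
    rw [show l.length + 1 - (l.length + 1 - i) = i by omega]
    exact hi.2
  · intro i hi
    simp only [mem_filter, mem_Icc] at hi
    omega
  · intro i hi
    simp only [mem_filter, mem_Icc] at hi
    omega

section MaximalLetter

variable {u v : List ℕ} {n : ℕ}

theorem wordEntry_append_cons_length :
    wordEntry (u ++ (n + 1) :: v) (u.length + 1) = n + 1 := by
  rw [wordEntry_append_length_add one_ne_zero]
  rfl

theorem isPeak_append_cons_iff_of_le (hu : ∀ x ∈ u, x ≤ n) {i : ℕ} (hi : i ≤ u.length) :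
    IsPeak (u ++ (n + 1) :: v) i ↔ i < u.length ∧ IsPeak u i := by
  unfold IsPeak
  rcases hi.lt_or_eq with hi | rfl
  · rw [wordEntry_append_of_le (by omega), wordEntry_append_of_le (by omega),
      wordEntry_append_of_le (by omega)]
    simp only [hi, true_and]
  · have := wordEntry_le_of_forall_mem_le hu u.length
    simp only [wordEntry_append_of_le le_rfl, wordEntry_append_cons_length, lt_irrefl,
      false_and, iff_false, not_and, not_lt]
    omega

theorem isPeak_append_cons_length (hu : ∀ x ∈ u, x ≤ n) (hv : ∀ x ∈ v, x ≤ n) :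
    IsPeak (u ++ (n + 1) :: v) (u.length + 1) := by
  have hleft := wordEntry_le_of_forall_mem_le hu u.length
  have hright := wordEntry_le_of_forall_mem_le hv 1
  have hnext : wordEntry (u ++ (n + 1) :: v) (u.length + 1 + 1) = wordEntry v 1 := by
    rw [add_assoc, wordEntry_append_length_add two_ne_zero]
    rfl
  unfold IsPeak
  rw [wordEntry_append_cons_length, hnext, Nat.add_sub_cancel, wordEntry_append_of_le le_rfl]
  omega

theorem card_filter_isPeak_append_cons_left (hu : ∀ x ∈ u, x ≤ n) :
    #{i ∈ Icc 1 u.length | IsPeak (u ++ (n + 1) :: v) i} = wordLeftPeaks u := by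
  rw [wordLeftPeaks_eq_card]
  congr 1
  ext i
  simp only [mem_filter, mem_Icc]
  constructor
  · rintro ⟨hi, hpeak⟩
    obtain ⟨hlt, hpeak⟩ := (isPeak_append_cons_iff_of_le hu hi.2).1 hpeak
    exact ⟨⟨hi.1, by omega⟩, hpeak⟩
  · rintro ⟨hi, hpeak⟩
    exact ⟨⟨hi.1, by omega⟩,
      (isPeak_append_cons_iff_of_le hu (by omega)).2 ⟨by omega, hpeak⟩⟩

theorem card_filter_isPeak_append_cons_right (hv : ∀ x ∈ v, x ≤ n) :
    #{i ∈ Icc (u.length + 2) (u.length + 1 + v.length) | IsPeak (u ++ (n + 1) :: v) i} =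
      wordLeftPeaks v.reverse := by
  have hlen : (u ++ (n + 1) :: v).length = u.length + 1 + v.length := by
    simp only [List.length_append, List.length_cons]; omega
  have hvrev : ∀ x ∈ v.reverse, x ≤ n := fun x hx => hv x (List.mem_reverse.1 hx)
  calc #{i ∈ Icc (u.length + 2) (u.length + 1 + v.length) | IsPeak (u ++ (n + 1) :: v) i}
      = #{i ∈ Icc 1 v.length | IsPeak (u ++ (n + 1) :: v).reverse i} := by
        rw [card_filter_isPeak_reverse _ le_rfl (by omega), hlen]
        congr 3; omega
    _ = #{i ∈ Icc 1 v.reverse.length | IsPeak (v.reverse ++ (n + 1) :: u.reverse) i} := by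
        simp
    _ = wordLeftPeaks v.reverse := card_filter_isPeak_append_cons_left hvrev

end MaximalLetter

theorem forall_mem_le_of_perm_range' {u v : List ℕ} {n : ℕ}
    (h : (u ++ (n + 1) :: v).Perm (List.range' 1 (n + 1))) :
    (∀ x ∈ u, x ≤ n) ∧ ∀ x ∈ v, x ≤ n := by
  have h' : ((n + 1) :: (u ++ v)).Perm (List.range' 1 (n + 1)) := List.perm_middle.symm.trans h
  have hnotMem : n + 1 ∉ u ++ v := (List.nodup_cons.1 (h'.nodup_iff.2 (List.nodup_range' ..))).1
  have hle : ∀ x ∈ u ++ v, x ≤ n := fun x hx => by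
    have hx' := List.mem_range'_1.1 (h'.subset (List.mem_cons_of_mem _ hx))
    have hne : x ≠ n + 1 := fun hxn => hnotMem (hxn ▸ hx)
    omega
  exact ⟨fun x hx => hle x (List.mem_append_left _ hx),
    fun x hx => hle x (List.mem_append_right _ hx)⟩

/-- if `σ = π (n+1) τ` is a permutation of `[n+1]`, then the number of
exterior peaks of `σ` equals the number of left peaks of `π` plus the number of left
peaks of the reverse of `τ` plus `1`. -/
theorem stmt_7 (n : ℕ) (π τ : List ℕ)
    (h : (π ++ (n + 1) :: τ).Perm (List.range' 1 (n + 1))) :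
    wordExtPeaks (π ++ (n + 1) :: τ) = wordLeftPeaks π + wordLeftPeaks τ.reverse + 1 := by
  obtain ⟨hπ, hτ⟩ := forall_mem_le_of_perm_range' h
  have hlen : (π ++ (n + 1) :: τ).length = π.length + 1 + τ.length := by
    simp only [List.length_append, List.length_cons]; omega
  rw [wordExtPeaks_eq_card, hlen, card_filter_Icc_of_mem (isPeak_append_cons_length hπ hτ),
    card_filter_isPeak_append_cons_left hπ, card_filter_isPeak_append_cons_right hτ]
  omega
end

section
/- Let D be the unique derivation of the field of rational functions ℚ(x,y) extending the derivation of ℚ[x,y] determined by D(x) = x·y and D(y) = x². Then for every n ≥ 0, D^{2n}(x^{−1}) = x^{−1}·(y² − x²)ⁿ and D^{2n+1}(x^{−1}) = −x^{−1}·y·(y² − x²)ⁿ. -/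
open MvPolynomial

/-- The field of rational functions `ℚ(x,y)`. -/
noncomputable abbrev QXY := FractionRing (MvPolynomial (Fin 2) ℚ)

/-- The canonical embedding `ℚ[x,y] → ℚ(x,y)`. -/
noncomputable def ι : MvPolynomial (Fin 2) ℚ →+* QXY := algebraMap _ _

/-!
Writing `x, y` for the variables, `c = y² - x²` is a constant of `D`, since
`D c = 2y·x² - 2x·xy = 0`. With `u = x⁻¹` one has `D u = -u y` and
`D (u y) = -u y² + u x² = -u c`, so two applications of `D` multiply `u` by `c`, and the
formulas follow by induction on `n`.
-/

namespace Derivation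

/- The `R`-module structure of `A` is a separate instance argument, not the one induced by
`Algebra R A`: on `FractionRing` the two `ℚ`-module structures agree only up to a
non-reducible unfolding, so lemmas stated with `Algebra.toModule` would not apply to
derivations of `ℚ(x,y)`. -/
set_option linter.overlappingInstances false

section CommRing

variable {R A : Type*} [CommSemiring R] [CommRing A] [Algebra R A] [Module R A]
  (D : Derivation R A A)

theorem map_mul_pow_of_map_eq_zero {c : A} (hc : D c = 0) (a : A) (n : ℕ) :
    D (a * c ^ n) = D a * c ^ n := by
  rw [leibniz, leibniz_pow, hc, smul_zero, smul_zero, smul_zero, zero_add, smul_eq_mul, mul_comm]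

theorem iterate_apply_of_map_eq_neg {u v c : A} (hc : D c = 0) (hu : D u = -(u * v))
    (huv : D (u * v) = -(u * c)) (n : ℕ) :
    (⇑D)^[2 * n] u = u * c ^ n ∧ (⇑D)^[2 * n + 1] u = -(u * v * c ^ n) := by
  have odd_of_even {n : ℕ} (h : (⇑D)^[2 * n] u = u * c ^ n) :
      (⇑D)^[2 * n + 1] u = -(u * v * c ^ n) := by
    rw [Function.iterate_succ_apply', h, map_mul_pow_of_map_eq_zero D hc, hu, neg_mul]
  induction n with
  | zero => exact ⟨by simp, odd_of_even (by simp)⟩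
  | succ n ih =>
    have even : (⇑D)^[2 * (n + 1)] u = u * c ^ (n + 1) := by
      rw [show 2 * (n + 1) = 2 * n + 1 + 1 by ring, Function.iterate_succ_apply', ih.2, map_neg,
        map_mul_pow_of_map_eq_zero D hc, huv]
      ring
    exact ⟨even, odd_of_even even⟩

end CommRing

section Field

variable {R K : Type*} [CommRing R] [Field K] [Algebra R K] [Module R K]
  (D : Derivation R K K) {x y : K}

theorem map_sq_sub_sq_eq_zero (hx : D x = x * y) (hy : D y = x ^ 2) : D (y ^ 2 - x ^ 2) = 0 := by
  simp only [map_sub, leibniz_pow, hx, hy, smul_eq_mul]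
  ring

theorem map_inv_of_map_eq_mul (hx : D x = x * y) : D x⁻¹ = -(x⁻¹ * y) := by
  rw [leibniz_inv, hx, smul_eq_mul]
  rcases eq_or_ne x 0 with rfl | hx0
  · simp
  · field_simp

theorem map_inv_mul_of_map_eq_mul (hx : D x = x * y) (hy : D y = x ^ 2) :
    D (x⁻¹ * y) = -(x⁻¹ * (y ^ 2 - x ^ 2)) := by
  rw [leibniz, map_inv_of_map_eq_mul D hx, hy, smul_eq_mul, smul_eq_mul]
  ring

end Field

end Derivation

/-- for the derivation of `ℚ(x,y)` extending `D x = x·y`, `D y = x²`,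
`D^{2n}(x⁻¹) = x⁻¹·(y² − x²)ⁿ` and `D^{2n+1}(x⁻¹) = −x⁻¹·y·(y² − x²)ⁿ`. -/
theorem stmt_8 (D : Derivation ℚ QXY QXY)
    (hx : D (ι (X 0)) = ι (X 0 * X 1)) (hy : D (ι (X 1)) = ι (X 0 ^ 2)) (n : ℕ) :
    (⇑D)^[2 * n] ((ι (X 0))⁻¹) = (ι (X 0))⁻¹ * (ι (X 1) ^ 2 - ι (X 0) ^ 2) ^ n ∧
      (⇑D)^[2 * n + 1] ((ι (X 0))⁻¹)
        = -((ι (X 0))⁻¹ * ι (X 1) * (ι (X 1) ^ 2 - ι (X 0) ^ 2) ^ n) := by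
  rw [map_mul] at hx
  rw [map_pow] at hy
  exact D.iterate_apply_of_map_eq_neg (D.map_sq_sub_sq_eq_zero hx hy) (D.map_inv_of_map_eq_mul hx)
    (D.map_inv_mul_of_map_eq_mul hx hy) n
end

section
/- Let D be the unique derivation of the field of rational functions ℚ(x,y) extending the derivation of ℚ[x,y] determined by D(x) = x·y and D(y) = x². Then for every n ≥ 0, D^{2n}(x^{−1}y) = x^{−1}·y·(y² − x²)ⁿ and D^{2n+1}(x^{−1}y) = −x^{−1}·(y² − x²)^{n+1}. -/
/-!
With `u = x⁻¹y` and `w = y² − x²` one has `D w = 0`, `D(x⁻¹) = −u` and `D u = −x⁻¹w`, hence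
`D² u = w u`. Since `w` is a constant of `D`, multiplication by `w` commutes with `D`, so
`D^{2n} u = wⁿ u` and `D^{2n+1} u = wⁿ D u`.
-/

open MvPolynomial

namespace Function.Commute

variable {M : Type*} [Monoid M] {f : M → M} {w u : M}

theorem apply_pow_mul (hf : Function.Commute f (w * ·)) (n : ℕ) (a : M) :
    f (w ^ n * a) = w ^ n * f a := by
  simpa only [mul_left_iterate_apply] using hf.iterate_right n a

theorem iterate_two_mul_apply (hf : Function.Commute f (w * ·)) (hu : f (f u) = w * u) (n : ℕ) :
    f^[2 * n] u = w ^ n * u := by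
  induction n with
  | zero => simp
  | succ n ih =>
    rw [Nat.mul_succ, iterate_add_apply, iterate_succ_apply, iterate_one, hu,
      hf.iterate_left (2 * n) u, ih, pow_succ', mul_assoc]

theorem iterate_two_mul_add_one_apply (hf : Function.Commute f (w * ·)) (hu : f (f u) = w * u)
    (n : ℕ) :
    f^[2 * n + 1] u = w ^ n * f u := by
  rw [iterate_succ_apply', hf.iterate_two_mul_apply hu, hf.apply_pow_mul]

end Function.Commute

/- The `ℚ`-module structure on `ℚ(x,y)` carried by the derivation of the theorem is that of the
localization, not definitionally the one induced by `Algebra ℚ ℚ(x,y)`; so the `R`-module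
structure on the target is a separate argument. -/
section

set_option linter.overlappingInstances false

namespace Derivation

theorem commute_mul_left_of_map_eq_zero {R A : Type*} [CommSemiring R] [CommSemiring A]
    [Algebra R A] [Module R A] (D : Derivation R A A) {w : A} (hw : D w = 0) :
    Function.Commute D (w * ·) := fun a => by
  rw [leibniz, hw, smul_zero, add_zero, smul_eq_mul]

variable {R K : Type*} [CommRing R] [Field K] [Algebra R K] [Module R K]
  (D : Derivation R K K) {x y : K}

theorem map_inv_mul_eq (hx0 : x ≠ 0) (hx : D x = x * y) (hy : D y = x ^ 2) :
    D (x⁻¹ * y) = -(x⁻¹ * (y ^ 2 - x ^ 2)) := by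
  rw [leibniz, leibniz_inv, hx, hy]
  simp only [smul_eq_mul]
  field_simp
  ring

theorem map_map_inv_mul_eq (hx0 : x ≠ 0) (hx : D x = x * y) (hy : D y = x ^ 2) :
    D (D (x⁻¹ * y)) = (y ^ 2 - x ^ 2) * (x⁻¹ * y) := by
  rw [D.map_inv_mul_eq hx0 hx hy, map_neg, mul_comm,
    D.commute_mul_left_of_map_eq_zero (D.map_sq_sub_sq_eq_zero hx hy)]
  simp only [leibniz_inv, hx, smul_eq_mul]
  field_simp

end Derivation

end

/-- for the derivation of `ℚ(x,y)` extending `D x = x·y`, `D y = x²`,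
`D^{2n}(x⁻¹y) = x⁻¹·y·(y² − x²)ⁿ` and `D^{2n+1}(x⁻¹y) = −x⁻¹·(y² − x²)^{n+1}`. -/
theorem stmt_10 (D : Derivation ℚ QXY QXY)
    (hx : D (ι (X 0)) = ι (X 0 * X 1)) (hy : D (ι (X 1)) = ι (X 0 ^ 2)) (n : ℕ) :
    (⇑D)^[2 * n] ((ι (X 0))⁻¹ * ι (X 1))
        = (ι (X 0))⁻¹ * ι (X 1) * (ι (X 1) ^ 2 - ι (X 0) ^ 2) ^ n ∧
      (⇑D)^[2 * n + 1] ((ι (X 0))⁻¹ * ι (X 1))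
        = -((ι (X 0))⁻¹ * (ι (X 1) ^ 2 - ι (X 0) ^ 2) ^ (n + 1)) := by
  rw [map_mul] at hx
  rw [map_pow] at hy
  have hx0 : ι (X 0) ≠ 0 :=
    (map_ne_zero_iff _ (IsFractionRing.injective (MvPolynomial (Fin 2) ℚ) QXY)).2 (X_ne_zero 0)
  have hD := D.commute_mul_left_of_map_eq_zero (D.map_sq_sub_sq_eq_zero hx hy)
  have hDD := D.map_map_inv_mul_eq hx0 hx hy
  constructor
  · rw [hD.iterate_two_mul_apply hDD, mul_comm]
  · rw [hD.iterate_two_mul_add_one_apply hDD, D.map_inv_mul_eq hx0 hx hy]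
    ring
end

section
/- In the formal power series ring ℚ[x][[t]], the exponential generating function of the left peak polynomials is the formal exponential of the integrated exponential generating function of the exterior peak polynomials: Σ_{n≥0} L_n(x)·tⁿ/n! = Σ_{m≥0} (1/m!)·(Σ_{n≥0} W_n(x)·t^{n+1}/(n+1)!)^m. -/
open MvPolynomial

/-- The univariate left peak polynomial `L_n(x) = Σ_k L(n,k)·x^k`. -/
noncomputable def LpolyQ (n : ℕ) : Polynomial ℚ :=
  ∑ k ∈ Finset.range (n + 1), (leftPeakNum n k : Polynomial ℚ) * Polynomial.X ^ k

/-- The univariate exterior peak polynomial `W_n(x) = Σ_k W(n,k)·x^k`. -/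
noncomputable def WpolyQ (n : ℕ) : Polynomial ℚ :=
  ∑ k ∈ Finset.range (n + 1), (extPeakNum n k : Polynomial ℚ) * Polynomial.X ^ k

/-- `Σ_{n≥0} W_n(x)·t^{n+1}/(n+1)!`, an element of `ℚ[x][[t]]` with zero constant term. -/
noncomputable def WegfInt : PowerSeries (Polynomial ℚ) :=
  PowerSeries.mk fun m => if m = 0 then 0 else ((m.factorial : ℚ))⁻¹ • WpolyQ (m - 1)

/-!
Cutting a permutation of `[n+1]` at its entry `1` leaves a word of some length `j` on the left
and one of length `n - j` on the right. Once standardized, the left word is a permutation of `[j]`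
whose exterior peaks are exactly the left peaks of the original in that block, since the `1` acts
as `σ_{j+1} = 0`; the right word is a permutation of `[n-j]` whose left peaks are those of the
original in that block, since the `1` acts as `σ₀ = 0`; and `1` itself is never a left peak.
Choosing the entries of the left word in `C(n, j)` ways gives
`L_{n+1} = Σ_j C(n,j) W_j L_{n-j}`, i.e. `F' = G' F` for `F = Σ L_n tⁿ/n!` and
`G = Σ W_n t^{n+1}/(n+1)!`. The series `exp ∘ G` satisfies the same linear differential equation
with the same constant term, and over a torsion-free ring such a solution is unique.
-/

def peakCountOn (f : ℕ → ℕ) (s : Finset ℕ) : ℕ :=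
  (s.filter fun i => f (i - 1) < f i ∧ f (i + 1) < f i).card

section peakCountOn

variable (f : ℕ → ℕ)

lemma peakCountOn_le_card (s : Finset ℕ) : peakCountOn f s ≤ s.card :=
  Finset.card_filter_le _ _

lemma peakCountOn_Icc_split {a b c : ℕ} (hab : a ≤ b + 1) (hbc : b ≤ c) :
    peakCountOn f (Finset.Icc a c)
      = peakCountOn f (Finset.Icc a b) + peakCountOn f (Finset.Icc (b + 1) c) := by
  have hsplit : Finset.Icc a c = Finset.Icc a b ∪ Finset.Icc (b + 1) c := by
    ext i; simp only [Finset.mem_union, Finset.mem_Icc]; omega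
  have hdisj : Disjoint (Finset.Icc a b) (Finset.Icc (b + 1) c) := by
    rw [Finset.disjoint_left]; intro i; simp only [Finset.mem_Icc]; omega
  rw [peakCountOn, hsplit, Finset.filter_union,
    Finset.card_union_of_disjoint (Finset.disjoint_filter_filter hdisj)]
  rfl

lemma peakCountOn_Icc_of_not_peak {a b : ℕ}
    (h : a ≤ b → ¬(f (a - 1) < f a ∧ f (a + 1) < f a)) :
    peakCountOn f (Finset.Icc a b) = peakCountOn f (Finset.Icc (a + 1) b) := by
  rcases le_or_gt a b with hab | hab
  · rw [peakCountOn, ← Finset.insert_Icc_add_one_left_eq_Icc hab, Finset.filter_insert,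
      if_neg (h hab)]
    rfl
  · rw [Finset.Icc_eq_empty (by omega), Finset.Icc_eq_empty (by omega)]

lemma peakCountOn_Icc_add (a b k : ℕ) (ha : 1 ≤ a) :
    peakCountOn f (Finset.Icc (a + k) b)
      = peakCountOn (fun i => f (i + k)) (Finset.Icc a (b - k)) := by
  have hmap : Finset.Icc (a + k) b = (Finset.Icc a (b - k)).map (addRightEmbedding k) := by
    ext i
    simp only [Finset.mem_map, Finset.mem_Icc, addRightEmbedding_apply]
    constructor
    · intro hi; exact ⟨i - k, by omega, by omega⟩
    · rintro ⟨i, hi, rfl⟩; omega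
  rw [peakCountOn, peakCountOn, hmap, Finset.filter_map, Finset.card_map]
  congr 1
  refine Finset.filter_congr fun i hi => ?_
  rw [Finset.mem_Icc] at hi
  simp only [Function.comp_apply, addRightEmbedding_apply, show i + k - 1 = i - 1 + k by omega,
    add_right_comm i 1 k]

variable {f}

lemma peakCountOn_congr {g : ℕ → ℕ} {s : Finset ℕ}
    (h : ∀ i ∈ s, ∀ u, (u = i - 1 ∨ u = i + 1) → (f u < f i ↔ g u < g i)) :
    peakCountOn f s = peakCountOn g s := by
  rw [peakCountOn, peakCountOn, Finset.filter_congr fun i hi =>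
    and_congr (h i hi _ (Or.inl rfl)) (h i hi _ (Or.inr rfl))]

end peakCountOn

lemma leftPeakCount_eq_peakCountOn (n : ℕ) (σ : Equiv.Perm (Fin n)) :
    leftPeakCount n σ = peakCountOn (permEntry n σ) (Finset.Icc 1 (n - 1)) := rfl

lemma extPeakCount_eq_peakCountOn (n : ℕ) (σ : Equiv.Perm (Fin n)) :
    extPeakCount n σ = peakCountOn (permEntry n σ) (Finset.Icc 1 n) := rfl

lemma permEntry_of_le {m : ℕ} (γ : Equiv.Perm (Fin m)) {i : ℕ} (h1 : 1 ≤ i) (h2 : i ≤ m) :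
    permEntry m γ i = (γ ⟨i - 1, by omega⟩ : ℕ) + 1 :=
  dif_pos ⟨h1, h2⟩

lemma permEntry_zero {m : ℕ} (γ : Equiv.Perm (Fin m)) : permEntry m γ 0 = 0 :=
  dif_neg (by omega)

lemma permEntry_of_lt {m : ℕ} (γ : Equiv.Perm (Fin m)) {i : ℕ} (h : m < i) :
    permEntry m γ i = 0 :=
  dif_neg (by omega)

section minSplice

variable {n j : ℕ} (S : Finset (Fin n)) (hS : S.card = j)
  (α : Equiv.Perm (Fin j)) (β : Equiv.Perm (Fin (n - j)))

include hS in
lemma card_compl_eq_sub : Sᶜ.card = n - j := by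
  rw [Finset.card_compl, Fintype.card_fin, hS]

include hS in
lemma le_of_card_eq : j ≤ n :=
  hS ▸ (Finset.card_le_univ S).trans_eq (Fintype.card_fin n)

lemma orderEmbOfFin_ne_orderEmbOfFin_compl {m : ℕ} (hc : Sᶜ.card = m) (p : Fin j) (q : Fin m) :
    S.orderEmbOfFin hS p ≠ Sᶜ.orderEmbOfFin hc q := fun h =>
  Finset.mem_compl.1 (h ▸ Sᶜ.orderEmbOfFin_mem hc q) (S.orderEmbOfFin_mem hS p)

-- Values lie in `Fin (n + 1)`, so the entry `0` here is the minimum `1` of the paper.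
def minSpliceFun (i : Fin (n + 1)) : Fin (n + 1) :=
  if h : (i : ℕ) < j then (S.orderEmbOfFin hS (α ⟨i, h⟩)).succ
  else if h' : (i : ℕ) = j then 0
  else (Sᶜ.orderEmbOfFin (card_compl_eq_sub S hS)
    (β ⟨i - (j + 1), by have := i.isLt; omega⟩)).succ

lemma minSpliceFun_injective : Function.Injective (minSpliceFun S hS α β) := by
  intro i₁ i₂ h
  unfold minSpliceFun at h
  split_ifs at h <;>
    simp only [Fin.succ_inj, Fin.succ_ne_zero, (Fin.succ_ne_zero _).symm,
      EmbeddingLike.apply_eq_iff_eq, Fin.mk.injEq, orderEmbOfFin_ne_orderEmbOfFin_compl,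
      (orderEmbOfFin_ne_orderEmbOfFin_compl _ _ _ _ _).symm] at h <;>
    exact Fin.ext (by omega)

noncomputable def minSplice : Equiv.Perm (Fin (n + 1)) :=
  Equiv.ofBijective _ (Finite.injective_iff_bijective.mp (minSpliceFun_injective S hS α β))

lemma minSplice_apply_of_lt (i : Fin (n + 1)) (h : (i : ℕ) < j) :
    minSplice S hS α β i = (S.orderEmbOfFin hS (α ⟨i, h⟩)).succ :=
  dif_pos h

lemma minSplice_apply_of_eq (i : Fin (n + 1)) (h : (i : ℕ) = j) : minSplice S hS α β i = 0 := by
  rw [minSplice, Equiv.ofBijective_apply, minSpliceFun, dif_neg (by omega), dif_pos h]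

lemma minSplice_apply_of_gt (i : Fin (n + 1)) (h : j < (i : ℕ)) :
    minSplice S hS α β i = (Sᶜ.orderEmbOfFin (card_compl_eq_sub S hS)
      (β ⟨i - (j + 1), by have := i.isLt; omega⟩)).succ := by
  rw [minSplice, Equiv.ofBijective_apply, minSpliceFun, dif_neg (by omega), dif_neg (by omega)]

lemma minSplice_apply_eq_zero_iff (i : Fin (n + 1)) :
    minSplice S hS α β i = 0 ↔ (i : ℕ) = j := by
  refine ⟨fun h => ?_, minSplice_apply_of_eq S hS α β i⟩
  rcases lt_trichotomy (i : ℕ) j with hi | hi | hi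
  · rw [minSplice_apply_of_lt S hS α β i hi] at h
    exact absurd h (Fin.succ_ne_zero _)
  · exact hi
  · rw [minSplice_apply_of_gt S hS α β i hi] at h
    exact absurd h (Fin.succ_ne_zero _)

lemma minSplice_symm_succ_lt_iff (v : Fin n) :
    ((minSplice S hS α β).symm v.succ : ℕ) < j ↔ v ∈ S := by
  set i := (minSplice S hS α β).symm v.succ
  have hi : minSplice S hS α β i = v.succ := Equiv.apply_symm_apply _ _
  rcases lt_trichotomy (i : ℕ) j with hij | hij | hij
  · rw [minSplice_apply_of_lt S hS α β i hij, Fin.succ_inj] at hi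
    exact iff_of_true hij (hi ▸ S.orderEmbOfFin_mem hS _)
  · rw [minSplice_apply_of_eq S hS α β i hij] at hi
    exact absurd hi.symm (Fin.succ_ne_zero _)
  · rw [minSplice_apply_of_gt S hS α β i hij, Fin.succ_inj] at hi
    exact iff_of_false (by omega) (Finset.mem_compl.1 (hi ▸ Sᶜ.orderEmbOfFin_mem _ _))

lemma permEntry_minSplice_of_le {i : ℕ} (h1 : 1 ≤ i) (h2 : i ≤ j) :
    permEntry (n + 1) (minSplice S hS α β) i
      = (S.orderEmbOfFin hS (α ⟨i - 1, by omega⟩) : ℕ) + 2 := by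
  have hjn := le_of_card_eq S hS
  rw [permEntry_of_le _ h1 (by omega), minSplice_apply_of_lt _ _ _ _ _ (by simp only; omega)]
  rfl

lemma permEntry_minSplice_succ : permEntry (n + 1) (minSplice S hS α β) (j + 1) = 1 := by
  have hjn := le_of_card_eq S hS
  rw [permEntry_of_le _ (by omega) (by omega),
    minSplice_apply_of_eq _ _ _ _ _ (by simp only; omega)]
  rfl

lemma permEntry_minSplice_add {i : ℕ} (h1 : 1 ≤ i) (h2 : i ≤ n - j) :
    permEntry (n + 1) (minSplice S hS α β) (i + (j + 1))
      = (Sᶜ.orderEmbOfFin (card_compl_eq_sub S hS) (β ⟨i - 1, by omega⟩) : ℕ) + 2 := by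
  rw [permEntry_of_le _ (by omega) (by omega),
    minSplice_apply_of_gt _ _ _ _ _ (by simp only; omega)]
  simp only [Fin.val_succ, show i + (j + 1) - 1 - (j + 1) = i - 1 by omega]

lemma permEntry_minSplice_lt_iff {u v : ℕ} (hu : u ≤ j + 1) (hv1 : 1 ≤ v) (hv2 : v ≤ j) :
    permEntry (n + 1) (minSplice S hS α β) u < permEntry (n + 1) (minSplice S hS α β) v
      ↔ permEntry j α u < permEntry j α v := by
  rw [permEntry_minSplice_of_le S hS α β hv1 hv2, permEntry_of_le α hv1 hv2]
  rcases (by omega : u = 0 ∨ (1 ≤ u ∧ u ≤ j) ∨ u = j + 1) with rfl | ⟨hu1, hu2⟩ | rfl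
  · rw [permEntry_zero, permEntry_zero]
    omega
  · rw [permEntry_minSplice_of_le S hS α β hu1 hu2, permEntry_of_le α hu1 hu2]
    simp only [add_lt_add_iff_right, Fin.val_fin_lt, OrderEmbedding.lt_iff_lt]
  · rw [permEntry_minSplice_succ, permEntry_of_lt α (by omega)]
    omega

lemma permEntry_minSplice_add_lt_iff (u : ℕ) {v : ℕ} (hv1 : 1 ≤ v) (hv2 : v ≤ n - j) :
    permEntry (n + 1) (minSplice S hS α β) (u + (j + 1))
        < permEntry (n + 1) (minSplice S hS α β) (v + (j + 1))
      ↔ permEntry (n - j) β u < permEntry (n - j) β v := by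
  rw [permEntry_minSplice_add S hS α β hv1 hv2, permEntry_of_le β hv1 hv2]
  rcases (by omega : u = 0 ∨ (1 ≤ u ∧ u ≤ n - j) ∨ n - j < u) with
    rfl | ⟨hu1, hu2⟩ | hu
  · rw [zero_add, permEntry_minSplice_succ, permEntry_zero]
    omega
  · rw [permEntry_minSplice_add S hS α β hu1 hu2, permEntry_of_le β hu1 hu2]
    simp only [add_lt_add_iff_right, Fin.val_fin_lt, OrderEmbedding.lt_iff_lt]
  · rw [permEntry_of_lt _ (by omega), permEntry_of_lt β hu]
    omega

lemma leftPeakCount_minSplice :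
    leftPeakCount (n + 1) (minSplice S hS α β)
      = extPeakCount j α + leftPeakCount (n - j) β := by
  have hjn := le_of_card_eq S hS
  set e := permEntry (n + 1) (minSplice S hS α β)
  have hmin : j + 1 ≤ n → ¬(e (j + 1 - 1) < e (j + 1) ∧ e (j + 1 + 1) < e (j + 1)) :=
    fun h hpeak => by
      have hnext : 2 ≤ e (j + 1 + 1) := by
        simp only [e, add_comm (j + 1) 1, permEntry_minSplice_add S hS α β le_rfl (by omega)]
        omega
      have hone : e (j + 1) = 1 := permEntry_minSplice_succ S hS α β
      omega
  calc leftPeakCount (n + 1) (minSplice S hS α β)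
      = peakCountOn e (Finset.Icc 1 j) + peakCountOn e (Finset.Icc (1 + (j + 1)) n) := by
        rw [leftPeakCount_eq_peakCountOn, Nat.add_sub_cancel,
          peakCountOn_Icc_split e (by omega) hjn, peakCountOn_Icc_of_not_peak e hmin,
          add_comm 1 (j + 1)]
    _ = peakCountOn (permEntry j α) (Finset.Icc 1 j)
          + peakCountOn (permEntry (n - j) β) (Finset.Icc 1 (n - j - 1)) := by
        rw [peakCountOn_Icc_add e 1 n (j + 1) le_rfl, Nat.sub_sub]
        congr 1
        · refine peakCountOn_congr fun i hi u hu => ?_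
          rw [Finset.mem_Icc] at hi
          exact permEntry_minSplice_lt_iff S hS α β (by omega) hi.1 hi.2
        · refine peakCountOn_congr fun i hi u _ => ?_
          rw [Finset.mem_Icc] at hi
          exact permEntry_minSplice_add_lt_iff S hS α β u hi.1 (by omega)
    _ = extPeakCount j α + leftPeakCount (n - j) β := by
        rw [extPeakCount_eq_peakCountOn, leftPeakCount_eq_peakCountOn]

end minSplice

abbrev MinSplit (n : ℕ) : Type :=
  Σ j : Fin (n + 1),
    {S : Finset (Fin n) // S.card = j} × Equiv.Perm (Fin j) × Equiv.Perm (Fin (n - j))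

noncomputable def MinSplit.toPerm {n : ℕ} : MinSplit n → Equiv.Perm (Fin (n + 1))
  | ⟨_, S, α, β⟩ => minSplice S.1 S.2 α β

lemma MinSplit.toPerm_injective (n : ℕ) : Function.Injective (MinSplit.toPerm (n := n)) := by
  rintro ⟨j, ⟨S, hS⟩, α, β⟩ ⟨j', ⟨S', hS'⟩, α', β'⟩ h
  simp only [MinSplit.toPerm] at h
  obtain rfl : j = j' := Fin.ext <| (minSplice_apply_eq_zero_iff S' hS' α' β' j).1 <|
    h ▸ (minSplice_apply_eq_zero_iff S hS α β j).2 rfl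
  obtain rfl : S = S' := Finset.ext fun v => by
    rw [← minSplice_symm_succ_lt_iff S hS α β, h, minSplice_symm_succ_lt_iff]
  obtain rfl : α = α' := Equiv.ext fun q => by
    have hq := congrArg (· ⟨q, by omega⟩) h
    simpa [minSplice_apply_of_lt] using hq
  obtain rfl : β = β' := Equiv.ext fun r => by
    have hr := congrArg (· ⟨r + (j + 1), by omega⟩) h
    simp only [minSplice_apply_of_gt S hS _ _ ⟨r + (j + 1), _⟩
      (show (j : ℕ) < r + (j + 1) by omega)] at hr
    simpa using hr
  rfl

lemma MinSplit.card_eq_factorial (n : ℕ) : Fintype.card (MinSplit n) = (n + 1).factorial := by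
  simp only [Fintype.card_sigma, Fintype.card_prod, Fintype.card_finset_len, Fintype.card_perm,
    Fintype.card_fin, ← mul_assoc]
  rw [Finset.sum_congr rfl fun j _ =>
    Nat.choose_mul_factorial_mul_factorial (Nat.lt_succ_iff.mp j.isLt)]
  simp [Nat.factorial_succ]

lemma sum_pow_leftPeakCount_succ {R : Type*} [CommSemiring R] (x : R) (n : ℕ) :
    ∑ σ : Equiv.Perm (Fin (n + 1)), x ^ leftPeakCount (n + 1) σ
      = ∑ j ∈ Finset.range (n + 1), (n.choose j : R) *
          ((∑ α : Equiv.Perm (Fin j), x ^ extPeakCount j α)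
            * ∑ β : Equiv.Perm (Fin (n - j)), x ^ leftPeakCount (n - j) β) := by
  have hbij : Function.Bijective (MinSplit.toPerm (n := n)) :=
    (Fintype.bijective_iff_injective_and_card _).2 ⟨MinSplit.toPerm_injective n,
      by rw [MinSplit.card_eq_factorial, Fintype.card_perm, Fintype.card_fin]⟩
  rw [← (Equiv.ofBijective _ hbij).sum_comp, Fintype.sum_sigma,
    ← Fin.sum_univ_eq_sum_range (fun j => (n.choose j : R) * _)]
  refine Fintype.sum_congr _ _ fun j => ?_
  simp only [Equiv.ofBijective_apply, Fintype.sum_prod_type, MinSplit.toPerm,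
    leftPeakCount_minSplice, pow_add, Finset.sum_const, Finset.card_univ,
    Fintype.card_finset_len, Fintype.card_fin, nsmul_eq_mul, Finset.sum_mul_sum]

lemma sum_card_filter_mul_pow {ι R : Type*} [Fintype ι] [CommSemiring R] (st : ι → ℕ)
    {N : ℕ} (h : ∀ i, st i < N) (x : R) :
    ∑ k ∈ Finset.range N, ((Finset.univ.filter fun i => st i = k).card : R) * x ^ k
      = ∑ i, x ^ st i := by
  rw [← Finset.sum_fiberwise_of_maps_to (g := st) (t := Finset.range N)
    fun i _ => Finset.mem_range.2 (h i)]
  refine Finset.sum_congr rfl fun k _ => ?_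
  rw [Finset.sum_congr rfl fun i hi => by rw [(Finset.mem_filter.1 hi).2], Finset.sum_const,
    nsmul_eq_mul]

lemma LpolyQ_eq_sum (n : ℕ) :
    LpolyQ n = ∑ σ : Equiv.Perm (Fin n), (Polynomial.X : Polynomial ℚ) ^ leftPeakCount n σ :=
  sum_card_filter_mul_pow _ (fun _ => (peakCountOn_le_card _ _).trans_lt (by simp)) _

lemma WpolyQ_eq_sum (n : ℕ) :
    WpolyQ n = ∑ σ : Equiv.Perm (Fin n), (Polynomial.X : Polynomial ℚ) ^ extPeakCount n σ :=
  sum_card_filter_mul_pow _ (fun _ => (peakCountOn_le_card _ _).trans_lt (by simp)) _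

lemma LpolyQ_zero : LpolyQ 0 = 1 := by
  simp [LpolyQ_eq_sum, leftPeakCount]

lemma LpolyQ_succ (n : ℕ) :
    LpolyQ (n + 1) = ∑ j ∈ Finset.range (n + 1),
      (n.choose j : Polynomial ℚ) * (WpolyQ j * LpolyQ (n - j)) := by
  simp only [LpolyQ_eq_sum, WpolyQ_eq_sum, sum_pow_leftPeakCount_succ]

lemma factorial_succ_inv_smul_mul {R : Type*} [CommRing R] [Algebra ℚ R] (n : ℕ) (r : R) :
    ((n + 1).factorial : ℚ)⁻¹ • r * (n + 1 : R) = (n.factorial : ℚ)⁻¹ • r := by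
  rw [smul_mul_assoc, mul_comm, ← Nat.cast_succ, ← nsmul_eq_mul, ← Nat.cast_smul_eq_nsmul ℚ,
    smul_smul, Nat.factorial_succ]
  congr 1
  push_cast
  field_simp

namespace PowerSeries

theorem eq_of_derivative_eq_mul {R : Type*} [CommSemiring R] [IsAddTorsionFree R] {f g h : R⟦X⟧}
    (hf : d⁄dX R f = h * f) (hg : d⁄dX R g = h * g) (h0 : constantCoeff f = constantCoeff g) :
    f = g := by
  ext n
  induction n using Nat.strong_induction_on with
  | _ n ih =>
    cases n with
    | zero => simpa using h0
    | succ n =>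
      have key : ∀ k : R⟦X⟧, d⁄dX R k = h * k →
          (n + 1) • coeff (n + 1) k = coeff n (h * k) :=
        fun k hk => by rw [← hk, coeff_derivative, nsmul_eq_mul', Nat.cast_succ]
      refine IsAddTorsionFree.nsmul_right_injective n.succ_ne_zero ?_
      simp only [key f hf, key g hg, coeff_mul]
      refine Finset.sum_congr rfl fun p hp => ?_
      rw [ih p.2 (by have := Finset.HasAntidiagonal.mem_antidiagonal.1 hp; omega)]

lemma coeff_pow_eq_zero_of_lt {R : Type*} [CommSemiring R] {g : R⟦X⟧} (hg : constantCoeff g = 0)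
    {N m : ℕ} (h : N < m) : coeff N (g ^ m) = 0 :=
  X_pow_dvd_iff.1 (pow_dvd_pow_of_dvd (X_dvd_iff.2 hg) m) N h

variable {R : Type*} [CommRing R] [Algebra ℚ R]

noncomputable def egf (a : ℕ → R) : R⟦X⟧ :=
  mk fun n => (n.factorial : ℚ)⁻¹ • a n

lemma constantCoeff_egf (a : ℕ → R) : constantCoeff (egf a) = a 0 := by
  simp [egf, ← coeff_zero_eq_constantCoeff_apply]

lemma derivative_egf (a : ℕ → R) : d⁄dX R (egf a) = egf fun n => a (n + 1) := by
  ext n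
  rw [coeff_derivative, egf, egf, coeff_mk, coeff_mk, factorial_succ_inv_smul_mul]

lemma egf_mul (a b : ℕ → R) :
    egf a * egf b
      = egf fun n => ∑ j ∈ Finset.range (n + 1), (n.choose j : R) * (a j * b (n - j)) := by
  ext n
  simp only [coeff_mul, Finset.Nat.sum_antidiagonal_eq_sum_range_succ_mk, egf, coeff_mk,
    Finset.smul_sum]
  refine Finset.sum_congr rfl fun j hj => ?_
  have hjn : j ≤ n := Nat.lt_succ_iff.mp (Finset.mem_range.1 hj)
  rw [smul_mul_smul_comm, ← nsmul_eq_mul, ← Nat.cast_smul_eq_nsmul ℚ, smul_smul,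
    Nat.cast_choose ℚ hjn]
  congr 1
  field_simp

variable {g : R⟦X⟧} (hg : constantCoeff g = 0)
include hg

lemma coeff_exp_subst (N : ℕ) :
    coeff N ((exp R).subst g)
      = ∑ m ∈ Finset.range (N + 1), (m.factorial : ℚ)⁻¹ • coeff N (g ^ m) := by
  rw [coeff_subst' (HasSubst.of_constantCoeff_zero' hg),
    finsum_eq_sum_of_support_subset (s := Finset.range (N + 1))]
  · simp only [coeff_exp, smul_eq_mul, ← Algebra.smul_def, one_div]
  · intro m hm
    by_contra hmN
    rw [Finset.mem_coe, Finset.mem_range, not_lt] at hmN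
    exact hm (by simp only [coeff_pow_eq_zero_of_lt hg (Nat.lt_of_succ_le hmN), smul_zero])

lemma constantCoeff_exp_subst : constantCoeff ((exp R).subst g) = 1 := by
  rw [← coeff_zero_eq_constantCoeff_apply, coeff_exp_subst hg]
  simp

lemma derivative_exp_subst : d⁄dX R ((exp R).subst g) = d⁄dX R g * (exp R).subst g := by
  rw [derivative_subst (HasSubst.of_constantCoeff_zero' hg), derivative_exp, mul_comm]

end PowerSeries

section WegfInt

open PowerSeries

lemma constantCoeff_WegfInt : constantCoeff WegfInt = 0 := by
  simp [WegfInt, ← coeff_zero_eq_constantCoeff_apply]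

lemma derivative_WegfInt : d⁄dX (Polynomial ℚ) WegfInt = egf WpolyQ := by
  ext n
  rw [coeff_derivative, WegfInt, egf, coeff_mk, coeff_mk, if_neg n.succ_ne_zero,
    Nat.add_sub_cancel, factorial_succ_inv_smul_mul]

lemma derivative_egf_LpolyQ :
    d⁄dX (Polynomial ℚ) (egf LpolyQ) = d⁄dX (Polynomial ℚ) WegfInt * egf LpolyQ := by
  rw [derivative_egf, derivative_WegfInt, egf_mul]
  simp only [LpolyQ_succ]

end WegfInt

/-- `Σ_{n≥0} L_n(x)·tⁿ/n! = Σ_{m≥0} (1/m!)·(Σ_{n≥0} W_n(x)·t^{n+1}/(n+1)!)^m`,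
the right side being the formal exponential (its `t^N`-coefficient only involves `m ≤ N`
since the inner series has zero constant term). -/
theorem stmt_11 :
    (PowerSeries.mk fun n => ((n.factorial : ℚ))⁻¹ • LpolyQ n)
      = PowerSeries.mk fun N => ∑ m ∈ Finset.range (N + 1),
          ((m.factorial : ℚ))⁻¹ • (PowerSeries.coeff (R := Polynomial ℚ) N (WegfInt ^ m)) := by
  have hexp : (PowerSeries.mk fun N => ∑ m ∈ Finset.range (N + 1),
      ((m.factorial : ℚ))⁻¹ • PowerSeries.coeff N (WegfInt ^ m))
        = (PowerSeries.exp (Polynomial ℚ)).subst WegfInt :=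
    PowerSeries.ext fun N => by
      rw [PowerSeries.coeff_mk, PowerSeries.coeff_exp_subst constantCoeff_WegfInt]
  rw [hexp]
  refine PowerSeries.eq_of_derivative_eq_mul (f := PowerSeries.egf LpolyQ)
    derivative_egf_LpolyQ (PowerSeries.derivative_exp_subst constantCoeff_WegfInt) ?_
  rw [PowerSeries.constantCoeff_exp_subst constantCoeff_WegfInt, PowerSeries.constantCoeff_egf,
    LpolyQ_zero]
end

section
/- Let D be the unique derivation of the polynomial ring ℚ[a,x,y] determined by D(a) = a·x, D(x) = x·y and D(y) = x². Then for every n ≥ 0, Dⁿ(a) = a·Σ_{k=1}^{n} Λ(n,k)·x^k·y^{n−k}, where Λ(n,k) is the number of permutations of [n] with exactly k up-down runs (the n = 0 case reading D⁰(a) = a). -/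
open MvPolynomial

/-!
Put `F n = ∑ σ, x ^ runs σ * y ^ (n - runs σ)` over the permutations of `[n]`; since
`D (a * F n) = a * (D (F n) + x * F n)`, it suffices that `D (F n) + x * F n = F (n + 1)`.
Every permutation of `[n + 1]` arises exactly once by inserting the value `n + 1` into some `τ`
of `[n]` at one of `n + 1` places. Reading `0, τ₁, …, τₙ` as a word of ascents and descents, if
`τ` has `r` up-down runs then `r` of these places (the gaps next to a peak, and the very end after
a final ascent) keep `r` runs, one place at the end gives `r + 1`, and the remaining `n - r` give
`r + 2`. On the polynomial side this is, with `s = n - r`,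
`D (x^r y^s) + x^(r+1) y^s = r x^r y^(s+1) + x^(r+1) y^s + s x^(r+2) y^(s-1)`.
-/

open Finset

namespace UpDownRuns

def turnCount (w : ℕ → Bool) (m : ℕ) : ℕ :=
  ∑ j ∈ range m, if w j = w (j + 1) then 0 else 1

/-- The direction word after a new maximum is put into the gap of direction `w g`: that letter
becomes an ascent followed by a descent. -/
def insertPeak (w : ℕ → Bool) (g : ℕ) : ℕ → Bool := fun j =>
  if j < g then w j else if j = g then true else if j = g + 1 then false else w (j - 1)

def NextToPeak (w : ℕ → Bool) (g : ℕ) : Prop :=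
  w g = true ∧ w (g + 1) = false ∨ w (g - 1) = true ∧ w g = false

instance (w : ℕ → Bool) (g : ℕ) : Decidable (NextToPeak w g) := by
  unfold NextToPeak; infer_instance

section DirectionWords

lemma turnCount_succ (w : ℕ → Bool) (m : ℕ) :
    turnCount w (m + 1) = turnCount w m + if w m = w (m + 1) then 0 else 1 :=
  sum_range_succ _ m

lemma turnCount_le (w : ℕ → Bool) (m : ℕ) : turnCount w m ≤ m :=
  (sum_le_card_nsmul _ _ 1 fun j _ => by split <;> omega).trans (by simp)

variable {w : ℕ → Bool}

lemma turnCount_congr {w' : ℕ → Bool} {m : ℕ} (h : ∀ j ≤ m, w j = w' j) :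
    turnCount w m = turnCount w' m :=
  sum_congr rfl fun j hj => by
    rw [mem_range] at hj
    rw [h j (by omega), h (j + 1) (by omega)]

lemma insertPeak_of_lt {g j : ℕ} (h : j < g) : insertPeak w g j = w j := by
  simp [insertPeak, h]

@[simp] lemma insertPeak_self (g : ℕ) : insertPeak w g g = true := by
  simp [insertPeak]

@[simp] lemma insertPeak_succ (g : ℕ) : insertPeak w g (g + 1) = false := by
  simp [insertPeak]

lemma insertPeak_of_add_two_le {g j : ℕ} (h : g + 2 ≤ j) : insertPeak w g j = w (j - 1) := by
  simp [insertPeak, show ¬ j < g by omega, show j ≠ g by omega, show j ≠ g + 1 by omega]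

lemma turnCount_insertPeak_of_lt {g m : ℕ} (h : m < g) :
    turnCount (insertPeak w g) m = turnCount w m :=
  turnCount_congr fun _ hj => insertPeak_of_lt (by omega)

lemma turnCount_insertPeak_add_two {g N : ℕ} (h : g < N) :
    turnCount (insertPeak w g) (N + 2) =
      turnCount (insertPeak w g) (N + 1) + if w N = w (N + 1) then 0 else 1 := by
  rw [turnCount_succ, insertPeak_of_add_two_le (by omega), insertPeak_of_add_two_le (by omega)]
  rfl

lemma turnCount_insertPeak_self (m : ℕ) :
    turnCount (insertPeak w (m + 1)) (m + 1) = turnCount w m + if w m then 0 else 1 := by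
  rw [turnCount_succ, turnCount_insertPeak_of_lt (by omega), insertPeak_of_lt (by omega),
    insertPeak_self]

lemma turnCount_insertPeak_succ_self (m : ℕ) :
    turnCount (insertPeak w (m + 1)) (m + 2) = turnCount w m + (if w m then 0 else 1) + 1 := by
  rw [turnCount_succ, turnCount_insertPeak_self, insertPeak_self, insertPeak_succ]
  rfl

/-- Inserting a peak next to an existing one trades that peak for the new one; elsewhere the
new peak and the new valley beside it add two turns. -/
lemma turnCount_insertPeak_of_pos_of_lt {g N : ℕ} (hg : 0 < g) (hN : g < N) :
    turnCount (insertPeak w g) (N + 1) =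
      if NextToPeak w g then turnCount w N else turnCount w N + 2 := by
  induction N, hN using Nat.le_induction with
  | base =>
    obtain ⟨h, rfl⟩ : ∃ h, g = h + 1 := ⟨g - 1, by omega⟩
    rw [turnCount_succ _ (h + 1 + 1), insertPeak_of_add_two_le (j := h + 1 + 1 + 1) (by omega),
      show h + 1 + 1 = h + 2 from rfl, turnCount_insertPeak_succ_self, turnCount_succ w (h + 1),
      turnCount_succ w h]
    simp only [NextToPeak, Nat.add_sub_cancel, show h + 2 + 1 - 1 = h + 2 by omega]
    cases w h <;> cases w (h + 1) <;> cases w (h + 2) <;> simp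
  | succ N hN ih =>
    rw [turnCount_insertPeak_add_two (by omega), ih, turnCount_succ w N]
    split_ifs <;> omega

lemma card_nextToPeak (hw : w 0 = false) (m : ℕ) :
    #{q ∈ range m | NextToPeak w (q + 1)} + 1 =
      turnCount w (m + 1) + if w m = false ∧ w (m + 1) = false then 1 else 0 := by
  induction m with
  | zero => cases h : w 1 <;> simp [turnCount, hw, h]
  | succ m ih =>
    rw [card_filter, sum_range_succ, ← card_filter, turnCount_succ w (m + 1)]
    simp only [NextToPeak, Nat.add_sub_cancel] at ih ⊢
    revert ih
    cases w m <;> cases w (m + 1) <;> cases w (m + 2) <;> simp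

lemma sum_turnCount_insertPeak_interior {M : Type*} [AddCommMonoid M] (f : ℕ → M) (m : ℕ) :
    ∑ q ∈ range m, f (turnCount (insertPeak w (q + 1)) (m + 2)) =
      #{q ∈ range m | NextToPeak w (q + 1)} • f (turnCount w (m + 1)) +
        (m - #{q ∈ range m | NextToPeak w (q + 1)}) • f (turnCount w (m + 1) + 2) := by
  rw [sum_congr rfl fun q hq => congrArg f
      (turnCount_insertPeak_of_pos_of_lt q.succ_pos (by simpa using hq)),
    sum_apply_ite, sum_const, sum_const]
  have := card_filter_add_card_filter_not (s := range m) (fun q => NextToPeak w (q + 1))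
  rw [card_range] at this
  rw [show #{q ∈ range m | ¬NextToPeak w (q + 1)} = m - #{q ∈ range m | NextToPeak w (q + 1)}
    by omega]

theorem sum_turnCount_insertPeak {M : Type*} [AddCommMonoid M] (hw : w 0 = false) (f : ℕ → M)
    (n : ℕ) :
    ∑ q ∈ range (n + 1), f (turnCount (insertPeak w (q + 1)) (n + 1)) =
      turnCount w n • f (turnCount w n) + f (turnCount w n + 1) +
        (n - turnCount w n) • f (turnCount w n + 2) := by
  rcases n with _ | m
  · simp [turnCount, insertPeak, hw]
  have hcount := card_nextToPeak hw m
  have hle : #{q ∈ range m | NextToPeak w (q + 1)} ≤ m :=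
    (card_filter_le _ _).trans (card_range m).le
  rw [sum_range_succ, sum_range_succ, sum_turnCount_insertPeak_interior,
    turnCount_insertPeak_succ_self, turnCount_insertPeak_self]
  rw [turnCount_succ w m] at hcount ⊢
  generalize #{q ∈ range m | NextToPeak w (q + 1)} = a at *
  generalize turnCount w m = c at *
  obtain ⟨b, rfl⟩ := Nat.exists_eq_add_of_le hle
  rw [Nat.add_sub_cancel_left]
  cases hm : w (a + b) <;> cases hm' : w (a + b + 1) <;>
    simp only [hm, hm', reduceCtorEq, ite_true, ite_false, and_true, and_false, add_zero]
      at hcount ⊢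
  · obtain rfl : c = a := by omega
    rw [show c + b + 1 - c = b + 1 by omega, succ_nsmul]
    abel
  · obtain rfl : c = a := by omega
    rw [show c + b + 1 - (c + 1) = b by omega, succ_nsmul]
    abel
  · obtain rfl : c = a := by omega
    rw [show c + b + 1 - (c + 1) = b by omega, succ_nsmul]
    abel
  · obtain rfl : c = a + 1 := by omega
    rw [show a + b + 1 - (a + 1) = b by omega, succ_nsmul]
    abel

end DirectionWords

/-- Truncated subtraction makes `ascents e 0 = false`: the word opens with a virtual descent, so
that `turnCount` also counts the first run. -/
def ascents (e : ℕ → ℕ) (j : ℕ) : Bool :=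
  decide (e (j - 1) < e j)

def insertAt (e : ℕ → ℕ) (p v : ℕ) (i : ℕ) : ℕ :=
  if i ≤ p then e i else if i = p + 1 then v else e (i - 1)

lemma ascents_zero (e : ℕ → ℕ) : ascents e 0 = false := by
  simp [ascents]

lemma ascents_insertAt {e : ℕ → ℕ} {v : ℕ} (hv : ∀ i, e i < v) (p : ℕ) :
    ascents (insertAt e p v) = insertPeak (ascents e) (p + 1) := by
  funext j
  rcases (show j ≤ p ∨ j = p + 1 ∨ j = p + 2 ∨ p + 3 ≤ j by omega) with h | rfl | rfl | h
  · simp [ascents, insertAt, insertPeak_of_lt (show j < p + 1 by omega), h,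
      show j - 1 ≤ p by omega]
  · simp [ascents, insertAt, hv]
  · simp [ascents, insertAt, (hv _).le]
  · rw [insertPeak_of_add_two_le (by omega)]
    simp [ascents, insertAt, show ¬ j ≤ p by omega, show ¬ j - 1 ≤ p by omega,
      show j ≠ p + 1 by omega, show j - 1 ≠ p + 1 by omega]

section Permutations

variable {n : ℕ}

lemma permEntry_zero (σ : Equiv.Perm (Fin n)) : permEntry n σ 0 = 0 := rfl

lemma permEntry_succ (σ : Equiv.Perm (Fin n)) (i : Fin n) :
    permEntry n σ ((i : ℕ) + 1) = σ i + 1 := by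
  simp [permEntry]

lemma permEntry_of_lt (σ : Equiv.Perm (Fin n)) {i : ℕ} (h : n < i) : permEntry n σ i = 0 := by
  simp [permEntry, show ¬ i ≤ n by omega]

lemma permEntry_lt (σ : Equiv.Perm (Fin n)) (i : ℕ) : permEntry n σ i < n + 1 := by
  unfold permEntry
  split
  · exact Nat.succ_lt_succ (Fin.is_lt _)
  · omega

lemma eq_zero_or_exists_eq_succ {i : ℕ} (h : i ≤ n) :
    i = 0 ∨ ∃ k : Fin n, i = (k : ℕ) + 1 := by
  rcases i with _ | i
  · exact Or.inl rfl
  · exact Or.inr ⟨⟨i, by omega⟩, rfl⟩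

lemma permEntry_injOn (σ : Equiv.Perm (Fin n)) : Set.InjOn (permEntry n σ) (Set.Iic n) := by
  intro i hi j hj hij
  rcases eq_zero_or_exists_eq_succ hi with rfl | ⟨k, rfl⟩ <;>
    rcases eq_zero_or_exists_eq_succ hj with rfl | ⟨l, rfl⟩ <;>
    simp only [permEntry_zero, permEntry_succ] at hij
  · rfl
  · omega
  · omega
  · rw [σ.injective (Fin.ext (Nat.succ_injective hij))]

lemma udRunCount_eq_turnCount (σ : Equiv.Perm (Fin n)) :
    udRunCount n σ = turnCount (ascents (permEntry n σ)) n := by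
  rcases n with _ | m
  · simp [udRunCount, turnCount]
  have he1 : ascents (permEntry (m + 1) σ) 1 = true := by
    have h := permEntry_succ σ 0
    simp only [Fin.val_zero, zero_add] at h
    simp [ascents, permEntry_zero, h]
  rw [udRunCount, if_neg (by omega), turnCount, sum_range_succ', ascents_zero, he1, card_filter,
    ← Ico_add_one_right_eq_Icc, sum_Ico_eq_sum_range, add_tsub_cancel_right, add_comm]
  simp only [Bool.false_eq_true, if_false]
  set e := permEntry (m + 1) σ
  congr 1
  refine sum_congr rfl fun j hj => ?_
  have hj : j + 2 ≤ m + 1 := by simp at hj; omega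
  have h01 : e j ≠ e (j + 1) := fun h => by
    simpa using permEntry_injOn σ (Set.mem_Iic.2 (by omega)) (Set.mem_Iic.2 (by omega)) h
  have h12 : e (j + 1) ≠ e (j + 2) := fun h => by
    simpa using permEntry_injOn σ (Set.mem_Iic.2 (by omega)) (Set.mem_Iic.2 (by omega)) h
  simp only [ascents, add_comm 1 j, Nat.add_sub_cancel, show j + 1 + 1 = j + 2 from rfl,
    show j + 2 - 1 = j + 1 by omega, decide_eq_decide]
  split_ifs <;> omega

lemma udRunCount_le (σ : Equiv.Perm (Fin n)) : udRunCount n σ ≤ n :=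
  udRunCount_eq_turnCount σ ▸ turnCount_le _ _

def insertMax (τ : Equiv.Perm (Fin n)) (p : Fin (n + 1)) : Equiv.Perm (Fin (n + 1)) :=
  (finSuccEquiv' p).trans ((Equiv.optionCongr τ).trans finSuccEquivLast.symm)

@[simp] lemma insertMax_apply_self (τ : Equiv.Perm (Fin n)) (p : Fin (n + 1)) :
    insertMax τ p p = Fin.last n := by
  simp [insertMax]

@[simp] lemma insertMax_apply_succAbove (τ : Equiv.Perm (Fin n)) (p : Fin (n + 1)) (i : Fin n) :
    insertMax τ p (p.succAbove i) = (τ i).castSucc := by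
  simp [insertMax, finSuccEquivLast_symm_some]

lemma insertMax_injective :
    Function.Injective fun x : Equiv.Perm (Fin n) × Fin (n + 1) => insertMax x.1 x.2 := by
  rintro ⟨τ, p⟩ ⟨τ', p'⟩ h
  simp only at h
  obtain rfl : p = p' := by
    by_contra hne
    obtain ⟨i, rfl⟩ := Fin.exists_succAbove_eq hne
    have := congrArg (· (p'.succAbove i)) h
    simp only [insertMax_apply_self, insertMax_apply_succAbove] at this
    exact (Fin.castSucc_lt_last _).ne' this
  obtain rfl : τ = τ' := Equiv.ext fun i => by
    simpa using congrArg (· (p.succAbove i)) h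
  rfl

lemma insertMax_bijective :
    Function.Bijective fun x : Equiv.Perm (Fin n) × Fin (n + 1) => insertMax x.1 x.2 := by
  rw [Fintype.bijective_iff_injective_and_card]
  refine ⟨insertMax_injective, ?_⟩
  simp [Fintype.card_perm, Nat.factorial_succ, mul_comm]

lemma permEntry_insertMax (τ : Equiv.Perm (Fin n)) (p : Fin (n + 1)) :
    permEntry (n + 1) (insertMax τ p) = insertAt (permEntry n τ) p (n + 1) := by
  funext i
  rcases i with _ | j
  · simp [insertAt, permEntry_zero]
  by_cases hj : j < n + 1
  swap
  · rw [permEntry_of_lt _ (by omega), insertAt, if_neg (by omega), if_neg (by omega),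
      permEntry_of_lt _ (by omega)]
  obtain ⟨J, rfl⟩ : ∃ J : Fin (n + 1), (J : ℕ) = j := ⟨⟨j, hj⟩, rfl⟩
  rw [permEntry_succ]
  rcases Fin.eq_self_or_eq_succAbove p J with rfl | ⟨k, rfl⟩
  · simp [insertAt]
  · rw [insertMax_apply_succAbove, Fin.val_castSucc, ← permEntry_succ]
    by_cases hk : k.castSucc < p
    · rw [Fin.succAbove_of_castSucc_lt _ _ hk, insertAt, if_pos (by simpa [Fin.lt_def] using hk)]
      rfl
    · have hk' : (p : ℕ) ≤ k := by simpa [Fin.lt_def] using hk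
      rw [Fin.succAbove_of_le_castSucc _ _ (not_lt.1 hk), insertAt, Fin.val_succ,
        if_neg (by omega), if_neg (by omega)]
      rfl

theorem sum_udRunCount_insertMax {M : Type*} [AddCommMonoid M] (f : ℕ → M)
    (τ : Equiv.Perm (Fin n)) :
    ∑ p, f (udRunCount (n + 1) (insertMax τ p)) =
      udRunCount n τ • f (udRunCount n τ) + f (udRunCount n τ + 1) +
        (n - udRunCount n τ) • f (udRunCount n τ + 2) := by
  simp only [udRunCount_eq_turnCount, permEntry_insertMax,
    ascents_insertAt (permEntry_lt τ)]
  rw [Fin.sum_univ_eq_sum_range (fun p => f (turnCount (insertPeak _ (p + 1)) (n + 1)))]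
  exact sum_turnCount_insertPeak (ascents_zero _) f n

theorem sum_udRunCount_eq_sum_udRunNum {M : Type*} [AddCommMonoid M] (f : ℕ → M) :
    ∑ σ : Equiv.Perm (Fin n), f (udRunCount n σ) =
      ∑ k ∈ range (n + 1), udRunNum n k • f k := by
  rw [← sum_fiberwise_of_maps_to' (t := range (n + 1))
    fun σ _ => mem_range.2 (Nat.lt_succ_of_le (udRunCount_le σ))]
  simp [udRunNum]

end Permutations

section Derivation

variable {R A : Type*} [CommSemiring R] [CommSemiring A] [Algebra R A] (D : Derivation R A A)
  {a x y : A}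

lemma derivation_pow_of_eq_mul (hx : D x = x * y) (k : ℕ) :
    D (x ^ k) = k • (x ^ k * y) := by
  rcases k with _ | k
  · simp
  · rw [Derivation.leibniz_pow, hx, add_tsub_cancel_right, smul_eq_mul, pow_succ]
    ring

lemma derivation_pow_mul_pow_add_mul (hx : D x = x * y) (hy : D y = x ^ 2) {k n : ℕ}
    (hk : k ≤ n) :
    D (x ^ k * y ^ (n - k)) + x ^ k * y ^ (n - k) * x =
      k • (x ^ k * y ^ (n + 1 - k)) + x ^ (k + 1) * y ^ (n + 1 - (k + 1)) +
        (n - k) • (x ^ (k + 2) * y ^ (n + 1 - (k + 2))) := by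
  obtain ⟨s, rfl⟩ := Nat.exists_eq_add_of_le hk
  have hys : D (y ^ s) = s • (x ^ 2 * y ^ (s - 1)) := by
    rw [Derivation.leibniz_pow, hy, smul_eq_mul, mul_comm]
  simp only [add_tsub_cancel_left, show k + s + 1 - k = s + 1 by omega,
    show k + s + 1 - (k + 1) = s by omega, show k + s + 1 - (k + 2) = s - 1 by omega,
    Derivation.leibniz, derivation_pow_of_eq_mul D hx, hys, smul_eq_mul, nsmul_eq_mul]
  rcases s with _ | s
  · simp only [pow_succ, pow_zero]
    ring
  · simp only [add_tsub_cancel_right, pow_succ]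
    push_cast
    ring

theorem iterate_derivation_eq_sum_udRunCount (ha : D a = a * x) (hx : D x = x * y)
    (hy : D y = x ^ 2) (n : ℕ) :
    (⇑D)^[n] a =
      a * ∑ σ : Equiv.Perm (Fin n), x ^ udRunCount n σ * y ^ (n - udRunCount n σ) := by
  induction n with
  | zero => simp [udRunCount]
  | succ n ih =>
    rw [Function.iterate_succ_apply', ih, Derivation.leibniz, ha, map_sum,
      ← Fintype.sum_bijective _ insertMax_bijective _ _ fun _ => rfl, Fintype.sum_prod_type]
    simp only [sum_udRunCount_insertMax (fun k => x ^ k * y ^ (n + 1 - k)),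
      ← derivation_pow_mul_pow_add_mul D hx hy (udRunCount_le _), sum_add_distrib, smul_eq_mul,
      sum_mul, mul_add, mul_sum]
    ring_nf

end Derivation

end UpDownRuns

/-- for the derivation of `ℚ[a,x,y]` with `D a = a·x`, `D x = x·y`,
`D y = x²` (here `a = X 0`, `x = X 1`, `y = X 2`),
`Dⁿ(a) = a·Σ_k Λ(n,k)·x^k·y^{n−k}`. -/
theorem stmt_12 (D : Derivation ℚ (MvPolynomial (Fin 3) ℚ) (MvPolynomial (Fin 3) ℚ))
    (ha : D (X 0) = X 0 * X 1) (hx : D (X 1) = X 1 * X 2) (hy : D (X 2) = X 1 ^ 2) (n : ℕ) :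
    (⇑D)^[n] (X 0) = X 0 * ∑ k ∈ Finset.range (n + 1),
      (udRunNum n k : MvPolynomial (Fin 3) ℚ) * X 1 ^ k * X 2 ^ (n - k) := by
  rw [UpDownRuns.iterate_derivation_eq_sum_udRunCount D ha hx hy n,
    UpDownRuns.sum_udRunCount_eq_sum_udRunNum fun k => X 1 ^ k * X 2 ^ (n - k)]
  simp only [nsmul_eq_mul, mul_assoc]
end
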